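/- arXiv:2411.00649 — 10 statements merged into one kernel-verified Lean document; each statement's English description precedes it below -/
import Mathlib

section
/- For z : ℤ, the following are equivalent: (i) for all a₁ a₂ b₁ b₂ : ℤ, if a₁*b₁ - a₂*b₂ = 0 and a₁*b₂ + a₂*b₁ + z*a₂*b₂ = 0, then (a₁ = 0 ∧ a₂ = 0) or (b₁ = 0 ∧ b₂ = 0); (ii) z ≠ 2 and z ≠ -2. (That is, the z-ring has no zero divisors, i.e. is an integral domain, if and only if z ∉ {-2, 2}.) -/
/-! The norm `N(a₁, a₂) = a₁² + z a₁ a₂ + a₂²` of `a₁ + a₂ X ∈ ℤ[X]/(X² − zX + 1)` is multiplicative,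
so a zero divisor has norm zero. Since `4 N(a₁, a₂) = (2a₁ + z a₂)² − (z² − 4) a₂²`, a nonzero element of
norm zero forces `z² − 4` to be a perfect square, which happens only for `z = ±2`. Conversely,
`X ∓ 1` squares to zero when `z = ±2`. -/

namespace ZRing

def norm (z a₁ a₂ : ℤ) : ℤ := a₁ ^ 2 + z * a₁ * a₂ + a₂ ^ 2

theorem norm_mul (z a₁ a₂ b₁ b₂ : ℤ) :
    norm z (a₁ * b₁ - a₂ * b₂) (a₁ * b₂ + a₂ * b₁ + z * a₂ * b₂) = norm z a₁ a₂ * norm z b₁ b₂ := by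
  unfold norm; ring

theorem eq_two_or_neg_two_of_sq_eq_sq_sub_four {z n : ℤ} (h : n ^ 2 = z ^ 2 - 4) :
    z = 2 ∨ z = -2 := by
  have habs : |n| ^ 2 = |z| ^ 2 - 4 := by simpa only [sq_abs] using h
  have hlt : |n| < |z| := lt_of_pow_lt_pow_left₀ 2 (abs_nonneg z) (by linarith)
  have hz : |z| = 2 := by nlinarith [abs_nonneg n]
  exact (abs_eq zero_le_two).mp hz

theorem norm_eq_zero_iff {z : ℤ} (h2 : z ≠ 2) (h2' : z ≠ -2) {a₁ a₂ : ℤ} :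
    norm z a₁ a₂ = 0 ↔ a₁ = 0 ∧ a₂ = 0 := by
  refine ⟨fun h ↦ ?_, by rintro ⟨rfl, rfl⟩; simp [norm]⟩
  unfold norm at h
  suffices ha₂ : a₂ = 0 by
    subst ha₂
    exact ⟨pow_eq_zero_iff two_ne_zero |>.mp (by linarith), rfl⟩
  by_contra ha₂
  have hsq : (2 * a₁ + z * a₂) ^ 2 = a₂ ^ 2 * (z ^ 2 - 4) := by linear_combination 4 * h
  obtain ⟨n, hn⟩ : a₂ ∣ 2 * a₁ + z * a₂ :=
    (Int.pow_dvd_pow_iff two_ne_zero).mp ⟨z ^ 2 - 4, hsq⟩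
  have hn2 : n ^ 2 = z ^ 2 - 4 :=
    mul_left_cancel₀ (pow_ne_zero 2 ha₂) (by rw [← mul_pow, ← hn, hsq])
  rcases eq_two_or_neg_two_of_sq_eq_sq_sub_four hn2 with rfl | rfl <;> contradiction

end ZRing

theorem stmt1 (z : ℤ) :
    (∀ a₁ a₂ b₁ b₂ : ℤ,
      a₁ * b₁ - a₂ * b₂ = 0 → a₁ * b₂ + a₂ * b₁ + z * a₂ * b₂ = 0 →
        (a₁ = 0 ∧ a₂ = 0) ∨ (b₁ = 0 ∧ b₂ = 0)) ↔
    (z ≠ 2 ∧ z ≠ -2) := by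
  constructor
  · intro h
    constructor
    · rintro rfl
      simpa using h (-1) 1 (-1) 1 (by norm_num) (by norm_num)
    · rintro rfl
      simpa using h 1 1 1 1 (by norm_num) (by norm_num)
  · rintro ⟨h2, h2'⟩ a₁ a₂ b₁ b₂ e₁ e₂
    have hnorm : ZRing.norm z a₁ a₂ * ZRing.norm z b₁ b₂ = 0 := by
      rw [← ZRing.norm_mul, e₁, e₂]; simp [ZRing.norm]
    rcases mul_eq_zero.mp hnorm with h | h
    · exact Or.inl ((ZRing.norm_eq_zero_iff h2 h2').mp h)
    · exact Or.inr ((ZRing.norm_eq_zero_iff h2 h2').mp h)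
end

section
/- For all z₁ z₂ : ℤ, there exists a ring isomorphism AdjoinRoot (X^2 - C z₁ * X + 1 : ℤ[X]) ≃+* AdjoinRoot (X^2 - C z₂ * X + 1 : ℤ[X]) if and only if z₁ = z₂ or z₁ = -z₂. -/
open Polynomial AdjoinRoot

noncomputable abbrev Rz (z : ℤ) : Type :=
  AdjoinRoot (X ^ 2 - C z * X + 1 : ℤ[X])

lemma rz_uniq (z c d : ℤ)
    (h : (c : Rz z) + (d : Rz z) * root (X ^ 2 - C z * X + 1 : ℤ[X]) = 0) :
    c = 0 ∧ d = 0 := by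
  have hmk : (c : Rz z) + (d : Rz z) * root (X ^ 2 - C z * X + 1 : ℤ[X])
      = mk _ (C c + C d * X) := by
    simp [AdjoinRoot.mk_C]
  rw [hmk, AdjoinRoot.mk_eq_zero] at h
  have hf : (X ^ 2 - C z * X + 1 : ℤ[X]).degree = 2 := by compute_degree!
  have hd : (C c + C d * X : ℤ[X]).degree < 2 := by
    apply lt_of_le_of_lt (b := 1)
    · compute_degree
    · norm_num
  have h0 : (C c + C d * X : ℤ[X]) = 0 :=
    Polynomial.eq_zero_of_dvd_of_degree_lt h (by rw [hf]; exact hd)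
  constructor
  · have := congrArg (fun p => Polynomial.coeff p 0) h0
    simpa using this
  · have := congrArg (fun p => Polynomial.coeff p 1) h0
    simp only [Polynomial.coeff_add, Polynomial.coeff_C, Polynomial.coeff_C_mul,
      Polynomial.coeff_X_one, mul_one, Polynomial.coeff_zero] at this
    simpa using this

lemma root_sq (z : ℤ) :
    (root (X ^ 2 - C z * X + 1 : ℤ[X]))^2
      = (z : Rz z) * root (X ^ 2 - C z * X + 1 : ℤ[X]) - 1 := by
  have h : mk (X ^ 2 - C z * X + 1 : ℤ[X]) (X ^ 2 - C z * X + 1) = 0 :=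
    AdjoinRoot.mk_self
  simp only [map_add, map_sub, map_mul, map_pow, mk_X, AdjoinRoot.mk_C, map_one,
    algebraMap_int_eq, eq_intCast, map_intCast] at h
  linear_combination h

lemma aeval_neg_root (z : ℤ) :
    aeval (-(root (X ^ 2 - C (-z) * X + 1 : ℤ[X]))) (X ^ 2 - C z * X + 1 : ℤ[X]) = 0 := by
  have h := root_sq (-z)
  simp only [map_add, map_sub, map_mul, map_pow, aeval_X, aeval_C, map_one,
    algebraMap_int_eq, eq_intCast, map_intCast]
  push_cast at h ⊢
  linear_combination h

noncomputable def negEquiv (z : ℤ) : Rz z ≃+* Rz (-z) := by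
  refine (AlgEquiv.ofAlgHom
    (AdjoinRoot.liftAlgHom _ (Algebra.ofId ℤ _) (-(root (X ^ 2 - C (-z) * X + 1 : ℤ[X]))) (aeval_neg_root z))
    (AdjoinRoot.liftAlgHom _ (Algebra.ofId ℤ _) (-(root (X ^ 2 - C z * X + 1 : ℤ[X]))) ?_) ?_ ?_).toRingEquiv
  · have := aeval_neg_root (-z)
    rw [neg_neg] at this
    exact this
  · apply AdjoinRoot.algHom_ext
    simp only [AlgHom.comp_apply, AlgHom.id_apply]
    erw [AdjoinRoot.liftAlgHom_root]
    refine (map_neg _ _).trans ?_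
    erw [AdjoinRoot.liftAlgHom_root]
    exact neg_neg _
  · apply AdjoinRoot.algHom_ext
    simp only [AlgHom.comp_apply, AlgHom.id_apply]
    erw [AdjoinRoot.liftAlgHom_root, map_neg, AdjoinRoot.liftAlgHom_root, neg_neg]

lemma rz_monic (z : ℤ) : (X ^ 2 - C z * X + 1 : ℤ[X]).Monic := by
  monicity!

lemma rz_repr (z : ℤ) (x : Rz z) :
    ∃ c d : ℤ, x = (c : Rz z) + (d : Rz z) * root (X ^ 2 - C z * X + 1 : ℤ[X]) := by
  obtain ⟨p, rfl⟩ := AdjoinRoot.mk_surjective x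
  set f : ℤ[X] := X ^ 2 - C z * X + 1 with hfdef
  refine ⟨(p %ₘ f).coeff 0, (p %ₘ f).coeff 1, ?_⟩
  have h1 : mk f p = mk f (p %ₘ f) := by
    conv_lhs => rw [← Polynomial.modByMonic_add_div p f]
    rw [map_add, map_mul, AdjoinRoot.mk_self, zero_mul, add_zero]
  have h2 : (p %ₘ f).degree ≤ 1 := by
    have := Polynomial.degree_modByMonic_lt p (rz_monic z)
    have hf : f.degree = 2 := by rw [hfdef]; compute_degree!
    rw [hf] at this
    exact Order.le_of_lt_succ (by exact_mod_cast this)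
  have h3 : p %ₘ f = C ((p %ₘ f).coeff 1) * X + C ((p %ₘ f).coeff 0) :=
    Polynomial.eq_X_add_C_of_degree_le_one h2
  rw [h1]
  conv_lhs => rw [h3]
  simp only [map_add, map_mul, mk_X, AdjoinRoot.mk_C, algebraMap_int_eq, eq_intCast,
    map_intCast]
  ring

theorem stmt2 (z₁ z₂ : ℤ) :
    Nonempty (Rz z₁ ≃+* Rz z₂) ↔ z₁ = z₂ ∨ z₁ = -z₂ := by
  constructor
  · rintro ⟨e⟩
    set f₁ : ℤ[X] := X ^ 2 - C z₁ * X + 1 with hf₁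
    set α := root (X ^ 2 - C z₂ * X + 1 : ℤ[X]) with hα
    obtain ⟨a, b, hβ⟩ := rz_repr z₂ (e (root f₁))
    have hα2 := root_sq z₂
    have hpow : ∀ n : ℕ, ∃ c d : ℤ,
        (e (root f₁)) ^ n = (c : Rz z₂) + ((b * d : ℤ) : Rz z₂) * α := by
      intro n
      induction n with
      | zero => exact ⟨1, 0, by push_cast; simp⟩
      | succ n ih =>
        obtain ⟨c, d, hc⟩ := ih
        refine ⟨c * a - b ^ 2 * d, c + d * a + b * d * z₂, ?_⟩
        rw [pow_succ, hc, hβ]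
        push_cast
        linear_combination ((b : Rz z₂) ^ 2 * (d : Rz z₂)) * hα2
    have hall : ∀ x : Rz z₁, ∃ c d : ℤ,
        e x = (c : Rz z₂) + ((b * d : ℤ) : Rz z₂) * α := by
      intro x
      obtain ⟨p, rfl⟩ := AdjoinRoot.mk_surjective x
      induction p using Polynomial.induction_on' with
      | add p q hp hq =>
        obtain ⟨c1, d1, h1⟩ := hp
        obtain ⟨c2, d2, h2⟩ := hq
        refine ⟨c1 + c2, d1 + d2, ?_⟩
        rw [map_add, map_add, h1, h2]
        push_cast; ring
      | monomial n r =>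
        obtain ⟨c, d, hc⟩ := hpow n
        refine ⟨r * c, r * d, ?_⟩
        have : (mk f₁) (Polynomial.monomial n r) = (r : Rz z₁) * (root f₁) ^ n := by
          rw [← Polynomial.C_mul_X_pow_eq_monomial]
          simp [AdjoinRoot.mk_C]
        rw [this, map_mul, map_pow, map_intCast, hc]
        push_cast; ring
    obtain ⟨x, hx⟩ := e.surjective α
    obtain ⟨c, d, hcd⟩ := hall x
    rw [hx] at hcd
    have key0 : ((c : ℤ) : Rz z₂) + ((b * d - 1 : ℤ) : Rz z₂) * α = 0 := by
      push_cast at hcd ⊢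
      linear_combination -hcd
    obtain ⟨-, hbd⟩ := rz_uniq z₂ c (b * d - 1) key0
    have hbd' : b * d = 1 := by omega
    have he : (e (root f₁)) ^ 2 = (z₁ : Rz z₂) * e (root f₁) - 1 := by
      have h0 := congrArg e (root_sq z₁)
      simpa only [map_pow, map_sub, map_mul, map_one, map_intCast] using h0
    rw [hβ] at he
    have key : ((a ^ 2 - b ^ 2 - z₁ * a + 1 : ℤ) : Rz z₂)
        + ((2 * a * b + b ^ 2 * z₂ - z₁ * b : ℤ) : Rz z₂) * α = 0 := by
      push_cast
      linear_combination he - (b : Rz z₂) ^ 2 * hα2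
    obtain ⟨h1, h2⟩ := rz_uniq z₂ _ _ key
    have hb : b = 1 ∨ b = -1 :=
      Int.isUnit_iff.mp (IsUnit.of_mul_eq_one d hbd')
    have hb2 : b ^ 2 = 1 := by rcases hb with rfl | rfl <;> norm_num
    have ha : a = 0 ∨ a = z₁ := by
      have : a * (a - z₁) = 0 := by linear_combination h1 + hb2
      rcases mul_eq_zero.mp this with h | h
      · exact Or.inl h
      · exact Or.inr (by linarith)
    rcases hb with rfl | rfl <;> rcases ha with rfl | rfl <;>
      first
        | (left; linear_combination h2)
        | (left; linear_combination -h2)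
        | (right; linear_combination h2)
  · rintro (rfl | rfl)
    · exact ⟨RingEquiv.refl _⟩
    · exact ⟨(negEquiv z₂).symm⟩
end

section
/- Let z M : ℤ with z ≥ 0, and let S_M := {p : ℝ × ℝ | p.1^2 + z*p.1*p.2 + p.2^2 = M}. Then for every α ∈ S_M, the point I₊(α) := (-α.2, α.1 + z*α.2) lies in the connected component of α inside S_M (i.e. I₊(α) ∈ connectedComponentIn S_M α). In other words, multiplication by the imaginary unit i_z preserves each branch of the level set S_M when z ≥ 0. -/
/-!
Identify `(a, b)` with `a + b ω`, where `ω² = z ω - 1`. Then `p.1 ^ 2 + z p.1 p.2 + p.2 ^ 2` is the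
multiplicative norm `N` of this quadratic algebra and `I₊` is multiplication by `ω`. For `z > -2`
the norm is positive on the closed first quadrant minus the origin, so normalising the segment from
`1` to `ω` gives a path of norm-one elements `u` from `1` to `ω`; then `u * α` is a path from `α`
to `ω * α` inside `{N = N α}`.
-/

open Set

namespace QuadNorm

variable (z : ℝ)

def quadNorm (p : ℝ × ℝ) : ℝ := p.1 ^ 2 + z * p.1 * p.2 + p.2 ^ 2

/-- Multiplication `(a + b ω) (c + d ω)` in `ℝ[ω] / (ω² - z ω + 1)`. -/
def quadMul (u p : ℝ × ℝ) : ℝ × ℝ := (u.1 * p.1 - u.2 * p.2, u.1 * p.2 + u.2 * p.1 + z * u.2 * p.2)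

variable {z}

theorem quadNorm_quadMul (u p : ℝ × ℝ) :
    quadNorm z (quadMul z u p) = quadNorm z u * quadNorm z p := by
  simp only [quadNorm, quadMul]
  ring

theorem quadNorm_smul (c : ℝ) (p : ℝ × ℝ) : quadNorm z (c • p) = c ^ 2 * quadNorm z p := by
  simp only [quadNorm, Prod.smul_fst, Prod.smul_snd, smul_eq_mul]
  ring

theorem quadMul_one_zero (p : ℝ × ℝ) : quadMul z (1, 0) p = p := by
  ext <;> simp [quadMul]

theorem quadMul_zero_one (p : ℝ × ℝ) : quadMul z (0, 1) p = (-p.2, p.1 + z * p.2) := by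
  ext <;> simp [quadMul]

theorem continuous_quadMul_left (p : ℝ × ℝ) : Continuous fun u => quadMul z u p := by
  unfold quadMul
  fun_prop

theorem quadNorm_pos_of_nonneg (hz : -2 < z) {a b : ℝ} (ha : 0 ≤ a) (hb : 0 ≤ b)
    (hab : 0 < a + b) : 0 < quadNorm z (a, b) := by
  have hsplit : quadNorm z (a, b) = (a - b) ^ 2 + (z + 2) * (a * b) := by
    simp only [quadNorm]
    ring
  rcases (mul_nonneg ha hb).eq_or_lt with hab0 | habpos
  · have : (a - b) ^ 2 = (a + b) ^ 2 := by linear_combination 4 * hab0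
    rw [hsplit, ← hab0, this, mul_zero, add_zero]
    exact pow_pos hab 2
  · rw [hsplit]
    nlinarith [sq_nonneg (a - b)]

theorem joinedIn_quadNorm_one (hz : -2 < z) :
    JoinedIn (quadNorm z ⁻¹' {1}) ((1, 0) : ℝ × ℝ) (0, 1) := by
  set arc : ℝ → ℝ × ℝ := fun s => (√(quadNorm z (1 - s, s)))⁻¹ • (1 - s, s)
  have hpos : ∀ s ∈ Icc (0 : ℝ) 1, 0 < quadNorm z (1 - s, s) := fun s hs =>
    quadNorm_pos_of_nonneg hz (sub_nonneg.2 hs.2) hs.1 (by simp)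
  have hcont : ContinuousOn arc (Icc 0 1) := by
    have hnorm : Continuous fun s : ℝ => √(quadNorm z (1 - s, s)) := by
      unfold quadNorm
      fun_prop
    exact (hnorm.continuousOn.inv₀ fun s hs => (Real.sqrt_pos.2 (hpos s hs)).ne').smul
      (by fun_prop)
  refine JoinedIn.ofLine hcont (by simp [arc, quadNorm]) (by simp [arc, quadNorm]) ?_
  rintro _ ⟨s, hs, rfl⟩
  simp only [mem_preimage, mem_singleton_iff, arc, quadNorm_smul, inv_pow,
    Real.sq_sqrt (hpos s hs).le]
  exact inv_mul_cancel₀ (hpos s hs).ne'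

end QuadNorm

theorem JoinedIn.mem_connectedComponentIn {X : Type*} [TopologicalSpace X] {F : Set X} {x y : X}
    (h : JoinedIn F x y) : y ∈ connectedComponentIn F x := by
  have hrange : range h.somePath ⊆ connectedComponentIn F x :=
    (isConnected_range h.somePath.continuous).isPreconnected.subset_connectedComponentIn
      ⟨0, h.somePath.source⟩ (range_subset_iff.2 h.somePath_mem)
  exact hrange ⟨1, h.somePath.target⟩

open QuadNorm in
theorem stmt3 (z M : ℤ) (hz : 0 ≤ z) (α : ℝ × ℝ)
    (hα : α ∈ {p : ℝ × ℝ | p.1 ^ 2 + (z : ℝ) * p.1 * p.2 + p.2 ^ 2 = (M : ℝ)}) :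
    ((-α.2, α.1 + (z : ℝ) * α.2) : ℝ × ℝ) ∈
      connectedComponentIn
        {p : ℝ × ℝ | p.1 ^ 2 + (z : ℝ) * p.1 * p.2 + p.2 ^ 2 = (M : ℝ)} α := by
  have hz' : (-2 : ℝ) < z := by
    have : (0 : ℝ) ≤ z := by exact_mod_cast hz
    linarith
  have hpath := (joinedIn_quadNorm_one hz').map (continuous_quadMul_left (z := z) α)
  rw [quadMul_one_zero, quadMul_zero_one] at hpath
  refine (hpath.mono ?_).mem_connectedComponentIn
  rintro _ ⟨u, hu, rfl⟩
  change quadNorm (z : ℝ) (quadMul z u α) = M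
  rw [quadNorm_quadMul, hu, one_mul]
  exact hα
end

section
/- (Local Solution Theorem 2) Let z M : ℤ with 2 ≤ |z| and M ≠ 0, let S_M := {p : ℝ × ℝ | p.1^2 + z*p.1*p.2 + p.2^2 = M}, and let α₁ α₂ ∈ S_M with α₂ ∈ connectedComponentIn S_M α₁. Assume (a) |⟨α₁, α₂⟩| ≥ |M|, and (b) there is no γ ∈ connectedComponentIn S_M α₁ of the form γ = ((x:ℝ), (y:ℝ)) with x y : ℤ satisfying ⟨α₁, γ⟩ * ⟨α₂, γ⟩ ≤ 0. Then there are no x y : ℤ with x^2 + z*x*y + y^2 = M. -/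
/-- The level set `S_M ⊆ ℝ × ℝ` of `x² + zxy + y² = M`. -/
def levelSet (z M : ℤ) : Set (ℝ × ℝ) :=
  {p : ℝ × ℝ | p.1 ^ 2 + (z : ℝ) * p.1 * p.2 + p.2 ^ 2 = (M : ℝ)}

/-- The oriented area of two plane vectors. -/
def orientedArea (α β : ℝ × ℝ) : ℝ := α.1 * β.2 - α.2 * β.1

lemma factor_eq (z : ℤ) (r s : ℝ) (hrs : r * s = 1) (hsum : r + s = -(z:ℝ)) (a b : ℝ) :
    a^2 + (z:ℝ)*a*b + b^2 = (a - r*b)*(a - s*b) := by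
  linear_combination (a*b) * hsum + (-(b^2)) * hrs

lemma gap_lemma (a b D Q : ℝ) (ha : 0 < a) (hb : 0 < b) (hab : a ≤ b)
    (h1 : D*(a*b) ≤ (b-a)^2) (hQ1 : 1 ≤ Q) (hQD : (Q-1)^2 = D*Q) : Q*a ≤ b := by
  have h2 : 0 ≤ (b - Q*a)*(Q*b - a) := by nlinarith [h1, hQ1, mul_pos ha hb]
  by_contra hcon
  push_neg at hcon
  have h3 : 0 ≤ (Q*a - b) * (Q*(b - a)) :=
    mul_nonneg (by linarith) (mul_nonneg (by linarith) (by linarith))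
  have h4 : 0 < (Q*a - b)*(Q*a - b) := mul_pos (by linarith) (by linarith)
  have h5 : 0 ≤ (Q*a - b)*(b - a) := mul_nonneg (by linarith) (by linarith)
  nlinarith [h2, h3, h4, h5]

lemma sign_positive {S : Set (ℝ×ℝ)} {u : ℝ×ℝ → ℝ} (hu : Continuous u)
    (h0 : ∀ p ∈ S, u p ≠ 0) {α p : ℝ×ℝ} (hα : α ∈ S)
    (hp : p ∈ connectedComponentIn S α) : 0 < u p * u α := by
  have hconn : IsPreconnected (connectedComponentIn S α) := isPreconnected_connectedComponentIn
  have hαm : α ∈ connectedComponentIn S α := mem_connectedComponentIn hα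
  have hpS : p ∈ S := connectedComponentIn_subset S α hp
  have hup : u p ≠ 0 := h0 p hpS
  have huα : u α ≠ 0 := h0 α hα
  rcases hup.lt_or_gt with h1 | h1 <;> rcases huα.lt_or_gt with h2 | h2
  · exact mul_pos_of_neg_of_neg h1 h2
  · exfalso
    obtain ⟨q, hq, hq0⟩ := hconn.intermediate_value₂ hp hαm hu.continuousOn
      (continuousOn_const (c := (0:ℝ))) h1.le h2.le
    exact h0 q (connectedComponentIn_subset S α hq) hq0
  · exfalso
    obtain ⟨q, hq, hq0⟩ := hconn.intermediate_value₂ hαm hp hu.continuousOn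
      (continuousOn_const (c := (0:ℝ))) h2.le h1.le
    exact h0 q (connectedComponentIn_subset S α hq) hq0
  · exact mul_pos h1 h2

lemma orbit_lemma (z M : ℤ) (r : ℝ) (hr : r^2 + (z:ℝ)*r + 1 = 0) (x y : ℤ)
    (hxy : x^2 + z*x*y + y^2 = M) :
    ∀ n : ℤ, ∃ x' y' : ℤ, x'^2 + z*x'*y' + y'^2 = M ∧
      ((x':ℝ) - r*(y':ℝ)) = (-r)^n * ((x:ℝ) - r*(y:ℝ)) := by
  have hrne : r ≠ 0 := by rintro rfl; simp at hr
  have hnegr : (-r) ≠ 0 := neg_ne_zero.2 hrne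
  intro n
  induction n using Int.induction_on with
  | zero => exact ⟨x, y, hxy, by simp⟩
  | succ i ih =>
    obtain ⟨a, b, hab, hu⟩ := ih
    refine ⟨-b, a + z*b, by linear_combination hab, ?_⟩
    rw [zpow_add_one₀ hnegr,
      show ((-r)^(i:ℤ) * (-r)) * ((x:ℝ) - r*(y:ℝ)) = (-r) * ((-r)^(i:ℤ) * ((x:ℝ) - r*(y:ℝ))) from by ring,
      ← hu]
    push_cast
    linear_combination (-(b:ℝ)) * hr
  | pred i ih =>
    obtain ⟨a, b, hab, hu⟩ := ih
    refine ⟨z*a + b, -a, by linear_combination hab, ?_⟩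
    rw [zpow_sub_one₀ hnegr,
      show ((-r)^(-(i:ℤ)) * (-r)⁻¹) * ((x:ℝ) - r*(y:ℝ)) = (-r)⁻¹ * ((-r)^(-(i:ℤ)) * ((x:ℝ) - r*(y:ℝ))) from by ring,
      ← hu]
    push_cast
    field_simp
    linear_combination ((a:ℝ)) * hr

lemma gap_from_area (d c1 c2 A Mr : ℝ) (hM2 : 0 < Mr^2)
    (e12 : d*(c1*c2)*A = Mr*(c2^2 - c1^2)) (hA2 : Mr^2 ≤ A^2) :
    d^2*(c1^2*c2^2) ≤ (c2^2 - c1^2)^2 := by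
  have h5 : d^2*(c1^2*c2^2)*Mr^2 ≤ d^2*(c1^2*c2^2)*A^2 :=
    mul_le_mul_of_nonneg_left hA2 (by positivity)
  have h6 : d^2*(c1^2*c2^2)*A^2 = Mr^2*(c2^2 - c1^2)^2 := by
    linear_combination (d*(c1*c2)*A + Mr*(c2^2 - c1^2)) * e12
  nlinarith [h5, h6, hM2]

lemma final_sign (d c1 c2 t A1 A2 Mr : ℝ) (hd : d ≠ 0) (ht : t ≠ 0) (hcc : 0 < c1*c2)
    (e1 : d*(c1*t)*A1 = Mr*(t^2 - c1^2)) (e2 : d*(c2*t)*A2 = Mr*(t^2 - c2^2))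
    (h7 : (t^2 - c1^2)*(t^2 - c2^2) ≤ 0) : A1*A2 ≤ 0 := by
  have hco : 0 < d^2*((c1*c2)*t^2) :=
    mul_pos (by rw [pow_two]; exact mul_self_pos.2 hd)
      (mul_pos hcc (by rw [pow_two]; exact mul_self_pos.2 ht))
  have e3 : (d*(c1*t)*A1)*(d*(c2*t)*A2) = (Mr*(t^2 - c1^2))*(Mr*(t^2 - c2^2)) := by
    rw [e1, e2]
  have h13 : (Mr*(t^2 - c1^2))*(Mr*(t^2 - c2^2)) ≤ 0 := by nlinarith [h7, sq_nonneg Mr]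
  by_contra hcontra
  push_neg at hcontra
  nlinarith [e3, h13, mul_pos hco hcontra]

set_option maxHeartbeats 4000000 in
theorem stmt6 (z M : ℤ) (hz : 2 ≤ |z|) (hM : M ≠ 0)
    (α₁ α₂ : ℝ × ℝ) (h₁ : α₁ ∈ levelSet z M)
    (h₂ : α₂ ∈ connectedComponentIn (levelSet z M) α₁)
    (harea : |(M : ℝ)| ≤ |orientedArea α₁ α₂|)
    (hempty : ¬ ∃ x y : ℤ,
      (((x : ℝ), (y : ℝ)) : ℝ × ℝ) ∈ connectedComponentIn (levelSet z M) α₁ ∧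
      orientedArea α₁ ((x : ℝ), (y : ℝ)) * orientedArea α₂ ((x : ℝ), (y : ℝ)) ≤ 0) :
    ¬ ∃ x y : ℤ, x ^ 2 + z * x * y + y ^ 2 = M := by
  rintro ⟨x, y, hxy⟩
  apply hempty
  obtain ⟨r, s, hrs, hsum, hrle, hd2⟩ :
      ∃ r s : ℝ, r * s = 1 ∧ r + s = -(z:ℝ) ∧ r ≤ s ∧ (s - r)^2 = (z:ℝ)^2 - 4 := by
    have h4 : (0:ℝ) ≤ (z:ℝ)^2 - 4 := by
      have h4' : (4:ℤ) ≤ z^2 := by nlinarith [sq_abs z, hz]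
      have h4'' : ((4:ℤ):ℝ) ≤ ((z^2 : ℤ):ℝ) := Int.cast_le.2 h4'
      push_cast at h4''
      linarith
    have hdsq : (Real.sqrt ((z:ℝ)^2 - 4))^2 = (z:ℝ)^2 - 4 := Real.sq_sqrt h4
    have hdnn : 0 ≤ Real.sqrt ((z:ℝ)^2 - 4) := Real.sqrt_nonneg _
    exact ⟨(-(z:ℝ) - Real.sqrt ((z:ℝ)^2 - 4))/2, (-(z:ℝ) + Real.sqrt ((z:ℝ)^2 - 4))/2,
      by nlinarith [hdsq], by ring, by linarith, by nlinarith [hdsq]⟩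
  have hu0 : ∀ p ∈ levelSet z M, (p.1 - r*p.2) * (p.1 - s*p.2) = (M:ℝ) := by
    intro p hp
    rw [← factor_eq z r s hrs hsum p.1 p.2]
    exact hp
  have hMne : (M:ℝ) ≠ 0 := Int.cast_ne_zero.2 hM
  have hune : ∀ p ∈ levelSet z M, p.1 - r*p.2 ≠ 0 := by
    intro p hp h0
    apply hMne
    rw [← hu0 p hp, h0, zero_mul]
  have hucont : Continuous (fun p : ℝ×ℝ => p.1 - r*p.2) := by fun_prop
  have hc : α₁.1 - r*α₁.2 ≠ 0 := hune α₁ h₁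
  have h₂S : α₂ ∈ levelSet z M := connectedComponentIn_subset _ _ h₂
  have hc₂ : α₂.1 - r*α₂.2 ≠ 0 := hune α₂ h₂S
  have hcc2 : 0 < (α₂.1 - r*α₂.2) * (α₁.1 - r*α₁.2) := sign_positive hucont hune h₁ h₂
  have hxyR : (((x:ℝ), (y:ℝ)) : ℝ×ℝ) ∈ levelSet z M := by
    simp only [levelSet, Set.mem_setOf_eq]
    exact_mod_cast congrArg (Int.cast : ℤ → ℝ) hxy
  rcases eq_or_lt_of_le hrle with hsr | hlt
  · -- degenerate case: r = s, the level set is a pair of parallel lines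
    have hc2M : (α₁.1 - r*α₁.2) * (α₁.1 - r*α₁.2) = (M:ℝ) := by
      have h := hu0 α₁ h₁
      rwa [← hsr] at h
    have hr2 : r * r = 1 := by linear_combination hrs + r * hsr
    obtain ⟨rI, hrI⟩ : ∃ rI : ℤ, ((rI:ℤ):ℝ) = r := by
      rcases mul_self_eq_one_iff.1 hr2 with h | h
      · exact ⟨1, by rw [h]; norm_num⟩
      · exact ⟨-1, by rw [h]; norm_num⟩
    have hwM : ((x:ℝ) - r*(y:ℝ)) * ((x:ℝ) - r*(y:ℝ)) = (M:ℝ) := by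
      have h := hu0 _ hxyR
      rwa [← hsr] at h
    obtain ⟨w₀, hw₀⟩ : ∃ w₀ : ℤ, ((w₀:ℤ):ℝ) = α₁.1 - r*α₁.2 := by
      have hdiff : (((x:ℝ) - r*(y:ℝ)) - (α₁.1 - r*α₁.2)) * (((x:ℝ) - r*(y:ℝ)) + (α₁.1 - r*α₁.2)) = 0 := by
        linear_combination hwM - hc2M
      rcases mul_eq_zero.1 hdiff with h | h
      · exact ⟨x - rI*y, by push_cast [hrI]; linarith⟩
      · exact ⟨-(x - rI*y), by push_cast [hrI]; linarith⟩
    have hw₀ne : w₀ ≠ 0 := by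
      rintro rfl
      exact hc (by rw [← hw₀]; norm_num)
    have hcabs : (1:ℝ) ≤ |α₁.1 - r*α₁.2| := by
      rw [← hw₀]
      exact_mod_cast Int.one_le_abs hw₀ne
    -- the line through α₁
    have hφS : ∀ t : ℝ, ((α₁.1 - r*α₁.2 + r*t, t) : ℝ×ℝ) ∈ levelSet z M := by
      intro t
      simp only [levelSet, Set.mem_setOf_eq]
      linear_combination hc2M + ((α₁.1 - r*α₁.2)*t + r*t^2) * hsum + (α₁.1 - r*α₁.2)*t * hsr - t^2 * hrs
    have hconn : IsPreconnected ((fun t : ℝ => ((α₁.1 - r*α₁.2 + r*t, t) : ℝ×ℝ)) '' Set.univ) :=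
      isPreconnected_univ.image _ (Continuous.continuousOn (by fun_prop))
    have hα₁img : α₁ ∈ (fun t : ℝ => ((α₁.1 - r*α₁.2 + r*t, t) : ℝ×ℝ)) '' Set.univ := by
      refine ⟨α₁.2, Set.mem_univ _, ?_⟩
      show ((α₁.1 - r*α₁.2 + r*α₁.2, α₁.2) : ℝ×ℝ) = α₁
      have h1 : α₁.1 - r*α₁.2 + r*α₁.2 = α₁.1 := by ring
      rw [h1]
    have hsub : (fun t : ℝ => ((α₁.1 - r*α₁.2 + r*t, t) : ℝ×ℝ)) '' Set.univ
        ⊆ connectedComponentIn (levelSet z M) α₁ :=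
      hconn.subset_connectedComponentIn hα₁img (by rintro _ ⟨t, -, rfl⟩; exact hφS t)
    have hc₂M : (α₂.1 - r*α₂.2) * (α₂.1 - r*α₂.2) = (M:ℝ) := by
      have h := hu0 α₂ h₂S
      rwa [← hsr] at h
    have hc₂eq : α₂.1 - r*α₂.2 = α₁.1 - r*α₁.2 := by
      have hdiff : ((α₂.1 - r*α₂.2) - (α₁.1 - r*α₁.2)) * ((α₂.1 - r*α₂.2) + (α₁.1 - r*α₁.2)) = 0 := by
        linear_combination hc₂M - hc2M
      rcases mul_eq_zero.1 hdiff with h | h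
      · linarith [sub_eq_zero.1 h]
      · exfalso
        nlinarith [hcc2]
    have hA : orientedArea α₁ α₂ = (α₁.1 - r*α₁.2) * (α₂.2 - α₁.2) := by
      show α₁.1*α₂.2 - α₁.2*α₂.1 = _
      linear_combination (-α₁.2) * hc₂eq
    have habs : |α₁.1 - r*α₁.2| ≤ |α₂.2 - α₁.2| := by
      have h1 : |(M:ℝ)| = |α₁.1 - r*α₁.2| * |α₁.1 - r*α₁.2| := by
        rw [← abs_mul, hc2M]
      have h2 : |orientedArea α₁ α₂| = |α₁.1 - r*α₁.2| * |α₂.2 - α₁.2| := by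
        rw [hA, abs_mul]
      have h3 := harea
      rw [h1, h2] at h3
      exact le_of_mul_le_mul_left h3 (abs_pos.2 hc)
    set n : ℤ := ⌈min α₁.2 α₂.2⌉ with hndef
    have hn1 : min α₁.2 α₂.2 ≤ (n:ℝ) := Int.le_ceil _
    have hn2 : (n:ℝ) ≤ max α₁.2 α₂.2 := by
      have h3 : (n:ℝ) < min α₁.2 α₂.2 + 1 := by
        rw [hndef]
        exact Int.ceil_lt_add_one _
      have h4 := max_sub_min_eq_abs α₁.2 α₂.2
      linarith [hcabs, habs, abs_sub_comm α₂.2 α₁.2]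
    have hpt : (((w₀ + rI*n : ℤ):ℝ), ((n:ℤ):ℝ)) = ((α₁.1 - r*α₁.2 + r*(n:ℝ), (n:ℝ)) : ℝ×ℝ) := by
      rw [Prod.mk.injEq]
      refine ⟨?_, rfl⟩
      push_cast
      rw [hw₀, hrI]
    refine ⟨w₀ + rI*n, n, ?_, ?_⟩
    · rw [hpt]
      exact hsub ⟨(n:ℝ), Set.mem_univ _, rfl⟩
    · rw [hpt]
      have ea1 : orientedArea α₁ ((α₁.1 - r*α₁.2 + r*(n:ℝ), (n:ℝ)) : ℝ×ℝ)
          = (α₁.1 - r*α₁.2)*((n:ℝ) - α₁.2) := by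
        show α₁.1*(n:ℝ) - α₁.2*(α₁.1 - r*α₁.2 + r*(n:ℝ)) = _
        ring
      have ea2 : orientedArea α₂ ((α₁.1 - r*α₁.2 + r*(n:ℝ), (n:ℝ)) : ℝ×ℝ)
          = (α₁.1 - r*α₁.2)*((n:ℝ) - α₂.2) := by
        show α₂.1*(n:ℝ) - α₂.2*(α₁.1 - r*α₁.2 + r*(n:ℝ)) = _
        linear_combination ((n:ℝ)) * hc₂eq
      rw [ea1, ea2]
      have h7 : ((n:ℝ) - α₁.2) * ((n:ℝ) - α₂.2) ≤ 0 := by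
        rcases le_total α₁.2 α₂.2 with h | h
        · rw [min_eq_left h] at hn1
          rw [max_eq_right h] at hn2
          exact mul_nonpos_iff.2 (Or.inl ⟨by linarith, by linarith⟩)
        · rw [min_eq_right h] at hn1
          rw [max_eq_left h] at hn2
          exact mul_nonpos_iff.2 (Or.inr ⟨by linarith, by linarith⟩)
      nlinarith [h7, sq_nonneg (α₁.1 - r*α₁.2)]
  · -- nondegenerate case
    have hsrne : s - r ≠ 0 := (sub_pos.2 hlt).ne'
    set φ : ℝ → ℝ×ℝ := fun t => (t + r*((t - (M:ℝ)/t)/(s - r)), (t - (M:ℝ)/t)/(s - r)) with hφ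
    have hrep : ∀ p ∈ levelSet z M, p.1 - r*p.2 ≠ 0 → φ (p.1 - r*p.2) = p := by
      intro p hp hne
      have hv := hu0 p hp
      have hy : ((p.1 - r*p.2) - (M:ℝ)/(p.1 - r*p.2))/(s - r) = p.2 := by
        rw [div_eq_iff hsrne]
        field_simp
        linear_combination hv
      simp only [hφ]
      rw [Prod.mk.injEq]
      constructor
      · rw [hy]; ring
      · exact hy
    have hφS : ∀ t : ℝ, t ≠ 0 → φ t ∈ levelSet z M := by
      intro t ht
      simp only [hφ, levelSet, Set.mem_setOf_eq]
      rw [factor_eq z r s hrs hsum]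
      field_simp
      ring
    have areaφ : ∀ t₁ t₂ : ℝ, t₁ ≠ 0 → t₂ ≠ 0 →
        (s - r) * (t₁*t₂) * orientedArea (φ t₁) (φ t₂) = (M:ℝ) * (t₂^2 - t₁^2) := by
      intro t₁ t₂ h1 h2
      simp only [hφ, orientedArea]
      field_simp
      ring
    have hdomconn : IsPreconnected {t : ℝ | 0 < t * (α₁.1 - r*α₁.2)} := by
      rcases hc.lt_or_gt with hneg | hpos
      · have hset : {t : ℝ | 0 < t * (α₁.1 - r*α₁.2)} = Set.Iio 0 := by
          ext t
          simp only [Set.mem_setOf_eq, Set.mem_Iio, mul_pos_iff]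
          constructor
          · rintro (⟨h1, h2⟩|⟨h1, h2⟩)
            · linarith
            · exact h1
          · intro h
            exact Or.inr ⟨h, hneg⟩
        rw [hset]
        exact isPreconnected_Iio
      · have hset : {t : ℝ | 0 < t * (α₁.1 - r*α₁.2)} = Set.Ioi 0 := by
          ext t
          simp only [Set.mem_setOf_eq, Set.mem_Ioi, mul_pos_iff]
          constructor
          · rintro (⟨h1, h2⟩|⟨h1, h2⟩)
            · exact h1
            · linarith
          · intro h
            exact Or.inl ⟨h, hpos⟩
        rw [hset]
        exact isPreconnected_Ioi
    have hdomne : ∀ t ∈ {t : ℝ | 0 < t * (α₁.1 - r*α₁.2)}, t ≠ 0 := by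
      intro t ht h0
      rw [Set.mem_setOf_eq, h0, zero_mul] at ht
      exact lt_irrefl 0 ht
    have hcont : ContinuousOn φ {t : ℝ | 0 < t * (α₁.1 - r*α₁.2)} := by
      rw [hφ]
      have hy : ContinuousOn (fun t : ℝ => (t - (M:ℝ)/t)/(s - r))
          {t : ℝ | 0 < t * (α₁.1 - r*α₁.2)} :=
        (continuousOn_id.sub (continuousOn_const.div continuousOn_id hdomne)).div_const _
      exact (continuousOn_id.add (continuousOn_const.mul hy)).prodMk hy
    have hmemdom : α₁.1 - r*α₁.2 ∈ {t : ℝ | 0 < t * (α₁.1 - r*α₁.2)} := by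
      rw [Set.mem_setOf_eq]
      exact mul_self_pos.2 hc
    have hsub : φ '' {t : ℝ | 0 < t*(α₁.1 - r*α₁.2)} ⊆ connectedComponentIn (levelSet z M) α₁ :=
      (hdomconn.image φ hcont).subset_connectedComponentIn
        ⟨_, hmemdom, hrep α₁ h₁ hc⟩
        (by rintro _ ⟨t, ht, rfl⟩; exact hφS t (hdomne t ht))
    -- the area inequality between α₁ and α₂
    have e12 := areaφ (α₁.1 - r*α₁.2) (α₂.1 - r*α₂.2) hc hc₂
    rw [hrep α₁ h₁ hc, hrep α₂ h₂S hc₂] at e12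
    have hM2 : (0:ℝ) < (M:ℝ)^2 := by positivity
    have hca : 0 < (α₁.1 - r*α₁.2)^2 := by rw [pow_two]; exact mul_self_pos.2 hc
    have hcb : 0 < (α₂.1 - r*α₂.2)^2 := by rw [pow_two]; exact mul_self_pos.2 hc₂
    have hAbs2 : (M:ℝ)^2 ≤ (orientedArea α₁ α₂)^2 := by
      nlinarith [harea, abs_nonneg (M:ℝ), sq_abs (M:ℝ), sq_abs (orientedArea α₁ α₂)]
    have hgap0 : (s-r)^2 * ((α₁.1 - r*α₁.2)^2 * (α₂.1 - r*α₂.2)^2)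
        ≤ ((α₂.1 - r*α₂.2)^2 - (α₁.1 - r*α₁.2)^2)^2 :=
      gap_from_area (s-r) (α₁.1 - r*α₁.2) (α₂.1 - r*α₂.2) (orientedArea α₁ α₂) (M:ℝ)
        hM2 e12 hAbs2
    -- the multiplier Q
    have hr0 : r ≠ 0 := by
      intro h
      rw [h, zero_mul] at hrs
      exact one_ne_zero hrs.symm
    have hQ1 : 1 ≤ max (r^2) (s^2) := by
      by_contra h
      push_neg at h
      have h1 : r^2 < 1 := lt_of_le_of_lt (le_max_left _ _) h
      have h2 : s^2 < 1 := lt_of_le_of_lt (le_max_right _ _) h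
      nlinarith [hrs]
    have hQgt : 1 < max (r^2) (s^2) := by
      rcases eq_or_lt_of_le hQ1 with h | h
      · exfalso
        have h1 : r^2 ≤ 1 := by rw [h]; exact le_max_left _ _
        have h2 : s^2 ≤ 1 := by rw [h]; exact le_max_right _ _
        nlinarith [hrs, mul_pos (sub_pos.2 hlt) (sub_pos.2 hlt)]
      · exact h
    have hQD : (max (r^2) (s^2) - 1)^2 = (s-r)^2 * max (r^2) (s^2) := by
      rcases le_total (r^2) (s^2) with h | h
      · rw [max_eq_right h]
        linear_combination (2*s^2 - 1 - r*s) * hrs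
      · rw [max_eq_left h]
        linear_combination (2*r^2 - 1 - r*s) * hrs
    have hgapQ : max (r^2) (s^2) * min ((α₁.1 - r*α₁.2)^2) ((α₂.1 - r*α₂.2)^2)
        ≤ max ((α₁.1 - r*α₁.2)^2) ((α₂.1 - r*α₂.2)^2) := by
      rcases le_total ((α₁.1 - r*α₁.2)^2) ((α₂.1 - r*α₂.2)^2) with h | h
      · rw [min_eq_left h, max_eq_right h]
        exact gap_lemma _ _ _ _ hca hcb h hgap0 hQ1 hQD
      · rw [min_eq_right h, max_eq_left h]
        have hgap0' : (s-r)^2 * ((α₂.1 - r*α₂.2)^2 * (α₁.1 - r*α₁.2)^2)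
            ≤ ((α₁.1 - r*α₁.2)^2 - (α₂.1 - r*α₂.2)^2)^2 := by
          have e1 : (s-r)^2 * ((α₂.1 - r*α₂.2)^2 * (α₁.1 - r*α₁.2)^2)
              = (s-r)^2 * ((α₁.1 - r*α₁.2)^2 * (α₂.1 - r*α₂.2)^2) := by ring
          have e2 : ((α₁.1 - r*α₁.2)^2 - (α₂.1 - r*α₂.2)^2)^2
              = ((α₂.1 - r*α₂.2)^2 - (α₁.1 - r*α₁.2)^2)^2 := by ring
          rw [e1, e2]
          exact hgap0
        exact gap_lemma _ _ _ _ hcb hca h hgap0' hQ1 hQD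
    -- choose the exponent
    have he : ((x:ℝ) - r*(y:ℝ)) ≠ 0 := hune ((x:ℝ),(y:ℝ)) hxyR
    have he2 : 0 < ((x:ℝ) - r*(y:ℝ))^2 := by rw [pow_two]; exact mul_self_pos.2 he
    have hm0 : 0 < min ((α₁.1 - r*α₁.2)^2) ((α₂.1 - r*α₂.2)^2) := lt_min hca hcb
    obtain ⟨k, hk1, hk2⟩ := exists_mem_Ico_zpow (div_pos hm0 he2) hQgt
    have hQ0 : (0:ℝ) < max (r^2) (s^2) := lt_trans one_pos hQgt
    have hT1 : min ((α₁.1 - r*α₁.2)^2) ((α₂.1 - r*α₂.2)^2)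
        < (max (r^2) (s^2))^(k+1) * ((x:ℝ) - r*(y:ℝ))^2 := (div_lt_iff₀ he2).1 hk2
    have hT2 : (max (r^2) (s^2))^(k+1) * ((x:ℝ) - r*(y:ℝ))^2
        ≤ max (r^2) (s^2) * min ((α₁.1 - r*α₁.2)^2) ((α₂.1 - r*α₂.2)^2) := by
      have h8 : (max (r^2) (s^2))^k * ((x:ℝ) - r*(y:ℝ))^2
          ≤ min ((α₁.1 - r*α₁.2)^2) ((α₂.1 - r*α₂.2)^2) := (le_div_iff₀ he2).1 hk1
      have h9 : (max (r^2) (s^2))^(k+1) * ((x:ℝ) - r*(y:ℝ))^2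
          = max (r^2) (s^2) * ((max (r^2) (s^2))^k * ((x:ℝ) - r*(y:ℝ))^2) := by
        rw [zpow_add_one₀ (ne_of_gt hQ0)]
        ring
      rw [h9]
      exact mul_le_mul_of_nonneg_left h8 hQ0.le
    obtain ⟨n, hn⟩ : ∃ n : ℤ, ((r^2 : ℝ))^n = (max (r^2) (s^2))^(k+1) := by
      rcases le_total (r^2) (s^2) with h | h
      · refine ⟨-(k+1), ?_⟩
        have hinv : ((r^2 : ℝ))⁻¹ = s^2 := inv_eq_of_mul_eq_one_right (by nlinarith [hrs])
        rw [zpow_neg, ← inv_zpow, hinv, max_eq_right h]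
      · exact ⟨k+1, by rw [max_eq_left h]⟩
    have hr_root : r^2 + (z:ℝ)*r + 1 = 0 := by linear_combination r * hsum - hrs
    obtain ⟨x', y', hxy', hu'⟩ := orbit_lemma z M r hr_root x y hxy n
    have ht2 : ((x':ℝ) - r*(y':ℝ))^2 = (max (r^2) (s^2))^(k+1) * ((x:ℝ) - r*(y:ℝ))^2 := by
      rw [hu', mul_pow, ← hn]
      congr 1
      calc ((-r)^n)^2 = ((-r)^n)*((-r)^n) := by rw [pow_two]
        _ = ((-r)*(-r))^n := (mul_zpow _ _ _).symm
        _ = ((r^2 : ℝ))^n := by rw [show (-r)*(-r) = r^2 from by ring]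
    have hb1 : min ((α₁.1 - r*α₁.2)^2) ((α₂.1 - r*α₂.2)^2) ≤ ((x':ℝ) - r*(y':ℝ))^2 := by
      rw [ht2]
      linarith [hT1]
    have hb2 : ((x':ℝ) - r*(y':ℝ))^2 ≤ max ((α₁.1 - r*α₁.2)^2) ((α₂.1 - r*α₂.2)^2) := by
      rw [ht2]
      linarith [hT2, hgapQ]
    have htne : ((x':ℝ) - r*(y':ℝ)) ≠ 0 := by
      intro h0
      rw [h0] at hb1
      simp only [ne_eq, OfNat.ofNat_ne_zero, not_false_eq_true, zero_pow] at hb1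
      linarith [hm0]
    -- pick the sign so that the point lies on the branch of α₁
    obtain ⟨X, Y, hXYS, hXsq, hXsign⟩ : ∃ X Y : ℤ, (((X:ℝ),(Y:ℝ)) : ℝ×ℝ) ∈ levelSet z M ∧
        ((X:ℝ) - r*(Y:ℝ))^2 = ((x':ℝ) - r*(y':ℝ))^2 ∧
        0 < ((X:ℝ) - r*(Y:ℝ)) * (α₁.1 - r*α₁.2) := by
      have hx'S : (((x':ℝ),(y':ℝ)) : ℝ×ℝ) ∈ levelSet z M := by
        simp only [levelSet, Set.mem_setOf_eq]
        exact_mod_cast congrArg (Int.cast : ℤ → ℝ) hxy'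
      rcases lt_or_ge 0 (((x':ℝ) - r*(y':ℝ)) * (α₁.1 - r*α₁.2)) with hpos | hneg
      · exact ⟨x', y', hx'S, rfl, hpos⟩
      · have hEq : ((x':ℝ))^2 + (z:ℝ)*(x':ℝ)*(y':ℝ) + ((y':ℝ))^2 = (M:ℝ) := hx'S
        refine ⟨-x', -y', ?_, by push_cast; ring, ?_⟩
        · simp only [levelSet, Set.mem_setOf_eq]
          push_cast
          linear_combination hEq
        · have hne9 : ((x':ℝ) - r*(y':ℝ)) * (α₁.1 - r*α₁.2) ≠ 0 := mul_ne_zero htne hc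
          have h9 : ((x':ℝ) - r*(y':ℝ)) * (α₁.1 - r*α₁.2) < 0 := lt_of_le_of_ne hneg hne9
          push_cast
          nlinarith [h9]
    have htγne : ((X:ℝ) - r*(Y:ℝ)) ≠ 0 := fun h0 => by
      rw [h0, zero_mul] at hXsign
      exact lt_irrefl 0 hXsign
    have hrepXY : φ ((X:ℝ) - r*(Y:ℝ)) = (((X:ℝ),(Y:ℝ)) : ℝ×ℝ) := hrep _ hXYS htγne
    have hmemγ : (((X:ℝ),(Y:ℝ)) : ℝ×ℝ) ∈ connectedComponentIn (levelSet z M) α₁ :=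
      hsub ⟨(X:ℝ) - r*(Y:ℝ), hXsign, hrepXY⟩
    have ea1 := areaφ (α₁.1 - r*α₁.2) ((X:ℝ) - r*(Y:ℝ)) hc htγne
    rw [hrep α₁ h₁ hc, hrepXY] at ea1
    have ea2 := areaφ (α₂.1 - r*α₂.2) ((X:ℝ) - r*(Y:ℝ)) hc₂ htγne
    rw [hrep α₂ h₂S hc₂, hrepXY] at ea2
    refine ⟨X, Y, hmemγ, ?_⟩
    have h7 : (((X:ℝ) - r*(Y:ℝ))^2 - (α₁.1 - r*α₁.2)^2)
        * (((X:ℝ) - r*(Y:ℝ))^2 - (α₂.1 - r*α₂.2)^2) ≤ 0 := by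
      rcases le_total ((α₁.1 - r*α₁.2)^2) ((α₂.1 - r*α₂.2)^2) with h | h
      · rw [min_eq_left h] at hb1
        rw [max_eq_right h] at hb2
        exact mul_nonpos_iff.2 (Or.inl ⟨by linarith [hXsq], by linarith [hXsq]⟩)
      · rw [min_eq_right h] at hb1
        rw [max_eq_left h] at hb2
        exact mul_nonpos_iff.2 (Or.inr ⟨by linarith [hXsq], by linarith [hXsq]⟩)
    have h10 : 0 < (α₁.1 - r*α₁.2) * (α₂.1 - r*α₂.2) := by
      rw [mul_comm]
      exact hcc2
    exact final_sign (s-r) (α₁.1 - r*α₁.2) (α₂.1 - r*α₂.2) ((X:ℝ) - r*(Y:ℝ))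
      (orientedArea α₁ (((X:ℝ),(Y:ℝ)) : ℝ×ℝ)) (orientedArea α₂ (((X:ℝ),(Y:ℝ)) : ℝ×ℝ)) (M:ℝ)
      hsrne htγne h10 ea1 ea2 h7
end

section
/- (Characterization of the unit groups of z-rings) Let z : ℤ and R_z := AdjoinRoot (X^2 - C z * X + 1 : ℤ[X]). Then: (i) if z = 0, there is a group isomorphism (R_z)ˣ ≃* Multiplicative (ZMod 4); (ii) if z = 1 or z = -1, there is a group isomorphism (R_z)ˣ ≃* Multiplicative (ZMod 6); (iii) if 2 ≤ |z|, there is a group isomorphism (R_z)ˣ ≃* Multiplicative (ZMod 2 × ℤ). -/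
open Polynomial

/-- Concrete model of ℤ[X]/(X²-zX+1): pairs (a,b) representing a + b·x. -/
@[ext] structure Qr (z : ℤ) where
  a : ℤ
  b : ℤ

namespace Qr

variable {z : ℤ}

instance : Zero (Qr z) := ⟨⟨0, 0⟩⟩
instance : One (Qr z) := ⟨⟨1, 0⟩⟩
instance : Add (Qr z) := ⟨fun p q => ⟨p.a + q.a, p.b + q.b⟩⟩
instance : Neg (Qr z) := ⟨fun p => ⟨-p.a, -p.b⟩⟩
instance : Mul (Qr z) :=
  ⟨fun p q => ⟨p.a * q.a - p.b * q.b, p.a * q.b + p.b * q.a + z * (p.b * q.b)⟩⟩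

@[simp] lemma zero_a : (0 : Qr z).a = 0 := rfl
@[simp] lemma zero_b : (0 : Qr z).b = 0 := rfl
@[simp] lemma one_a : (1 : Qr z).a = 1 := rfl
@[simp] lemma one_b : (1 : Qr z).b = 0 := rfl
@[simp] lemma add_a (p q : Qr z) : (p + q).a = p.a + q.a := rfl
@[simp] lemma add_b (p q : Qr z) : (p + q).b = p.b + q.b := rfl
@[simp] lemma neg_a (p : Qr z) : (-p).a = -p.a := rfl
@[simp] lemma neg_b (p : Qr z) : (-p).b = -p.b := rfl
@[simp] lemma mul_a (p q : Qr z) : (p * q).a = p.a * q.a - p.b * q.b := rfl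
@[simp] lemma mul_b (p q : Qr z) : (p * q).b = p.a * q.b + p.b * q.a + z * (p.b * q.b) := rfl

instance : CommRing (Qr z) where
  add_assoc p q r := by ext <;> simp <;> ring
  zero_add p := by ext <;> simp
  add_zero p := by ext <;> simp
  add_comm p q := by ext <;> simp <;> ring
  mul_assoc p q r := by ext <;> simp <;> ring
  one_mul p := by ext <;> simp
  mul_one p := by ext <;> simp
  left_distrib p q r := by ext <;> simp <;> ring
  right_distrib p q r := by ext <;> simp <;> ring
  mul_comm p q := by ext <;> simp <;> ring
  zero_mul p := by ext <;> simp
  mul_zero p := by ext <;> simp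
  neg_add_cancel p := by ext <;> simp
  nsmul := fun n p => ⟨n * p.a, n * p.b⟩
  nsmul_zero p := by ext <;> show _ * _ = _ <;> simp
  nsmul_succ n p := by ext <;> show _ * _ = _ * _ + _ <;> simp <;> ring
  zsmul := fun n p => ⟨n * p.a, n * p.b⟩
  zsmul_zero' p := by ext <;> show _ * _ = _ <;> simp
  zsmul_succ' n p := by ext <;> show _ * _ = _ * _ + _ <;> simp <;> ring
  zsmul_neg' n p := by ext <;> show _ * _ = -(_ * _) <;> simp [Int.negSucc_eq] <;> ring
  natCast := fun n => ⟨n, 0⟩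
  natCast_zero := by ext <;> simp
  natCast_succ n := by ext <;> simp
  intCast := fun n => ⟨n, 0⟩
  intCast_ofNat n := rfl
  intCast_negSucc n :=
    show (⟨Int.negSucc n, 0⟩ : Qr z) = -(⟨((n + 1 : ℕ) : ℤ), 0⟩ : Qr z) from by
      ext <;> simp [Int.negSucc_eq]

@[simp] lemma intCast_a (n : ℤ) : (n : Qr z).a = n := rfl
@[simp] lemma intCast_b (n : ℤ) : (n : Qr z).b = 0 := rfl
@[simp] lemma natCast_a (n : ℕ) : (n : Qr z).a = n := rfl
@[simp] lemma natCast_b (n : ℕ) : (n : Qr z).b = 0 := rfl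

/-- the root -/
def x : Qr z := ⟨0, 1⟩

@[simp] lemma x_a : (x : Qr z).a = 0 := rfl
@[simp] lemma x_b : (x : Qr z).b = 1 := rfl

lemma x_sq : (x : Qr z) ^ 2 = (z : Qr z) * x - 1 := by
  ext <;> simp [pow_two, x, sub_eq_add_neg]

end Qr

namespace Qr

variable {z : ℤ}

@[simp] lemma sub_a (p q : Qr z) : (p - q).a = p.a - q.a := by
  rw [sub_eq_add_neg, sub_eq_add_neg]; simp
@[simp] lemma sub_b (p q : Qr z) : (p - q).b = p.b - q.b := by
  rw [sub_eq_add_neg, sub_eq_add_neg]; simp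

lemma ext_iff' {p q : Qr z} : p = q ↔ p.a = q.a ∧ p.b = q.b :=
  ⟨fun h => by subst h; exact ⟨rfl, rfl⟩, fun ⟨h1, h2⟩ => Qr.ext h1 h2⟩

/-- The norm, as a monoid hom. -/
def N : Qr z →* ℤ where
  toFun p := p.a ^ 2 + p.a * p.b * z + p.b ^ 2
  map_one' := by simp
  map_mul' p q := by simp; ring

lemma N_apply (p : Qr z) : N p = p.a ^ 2 + p.a * p.b * z + p.b ^ 2 := rfl

/-- conjugate -/
def conj (p : Qr z) : Qr z := ⟨p.a + p.b * z, -p.b⟩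

lemma mul_conj (p : Qr z) : p * conj p = (N p : Qr z) := by
  ext <;> simp [conj, N_apply, pow_two] <;> ring

/-- A pair of norm ±1 gives a unit. -/
def unitOf (p : Qr z) (h : N p = 1 ∨ N p = -1) : (Qr z)ˣ where
  val := p
  inv := (N p : Qr z) * conj p
  val_inv := by
    rw [← mul_assoc, mul_comm p _, mul_assoc, mul_conj, ← Int.cast_mul]
    rcases h with h | h <;> rw [h] <;> norm_num
  inv_val := by
    rw [mul_comm, mul_comm ((N p : ℤ) : Qr z) _, ← mul_assoc, mul_conj, ← Int.cast_mul]
    rcases h with h | h <;> rw [h] <;> norm_num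

@[simp] lemma unitOf_val (p : Qr z) (h) : (unitOf p h : Qr z) = p := rfl

/-- Norm of a unit is ±1. -/
lemma norm_unit (u : (Qr z)ˣ) : N (u : Qr z) = 1 ∨ N (u : Qr z) = -1 := by
  have h : N (u : Qr z) * N ((u⁻¹ : (Qr z)ˣ) : Qr z) = 1 := by
    rw [← map_mul]; simp
  rcases Int.isUnit_iff.mp (IsUnit.of_mul_eq_one _ h) with h' | h' <;> [left; right] <;>
    exact h'

/-- the root as a unit -/
def xU : (Qr z)ˣ := unitOf x (by left; simp [N_apply, x])

@[simp] lemma xU_val : ((xU : (Qr z)ˣ) : Qr z) = x := rfl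

/-- Negation symmetry z ↔ -z. -/
def negEquiv (z : ℤ) : Qr z ≃+* Qr (-z) where
  toFun p := ⟨p.a, -p.b⟩
  invFun p := ⟨p.a, -p.b⟩
  left_inv p := by ext <;> simp
  right_inv p := by ext <;> simp
  map_add' p q := by ext <;> simp <;> ring
  map_mul' p q := by ext <;> simp <;> ring

/-- forward hom -/
noncomputable def fwd (z : ℤ) : Qr z →+* Rz z where
  toFun := fun p => algebraMap ℤ _ p.a + algebraMap ℤ _ p.b * AdjoinRoot.root _
  map_one' := by simp
  map_zero' := by simp
  map_add' := fun p q => by simp; ring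
  map_mul' := fun p q => by
    have hroot : (AdjoinRoot.root (X ^ 2 - C z * X + 1 : ℤ[X])) ^ 2 -
        (z : Rz z) * AdjoinRoot.root _ + 1 = 0 := by
      have := AdjoinRoot.mk_self (f := (X ^ 2 - C z * X + 1 : ℤ[X]))
      simpa [AdjoinRoot.algebraMap_eq] using this
    simp only [mul_a, mul_b, algebraMap_int_eq, eq_intCast]
    push_cast
    linear_combination (-(p.b : Rz z) * q.b) * hroot

lemma fwd_apply (z : ℤ) (p : Qr z) :
    fwd z p = algebraMap ℤ _ p.a + algebraMap ℤ _ p.b * AdjoinRoot.root _ := rfl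

lemma fwd_x (z : ℤ) : fwd z x = AdjoinRoot.root _ := by
  rw [fwd_apply]; simp [x]

lemma hx : eval₂ (Int.castRingHom (Qr z)) x (X ^ 2 - C z * X + 1) = 0 := by
  rw [eval₂_add, eval₂_sub, eval₂_one, eval₂_mul, eval₂_C, eval₂_pow, eval₂_X]
  ext <;> simp [x, pow_two, sub_eq_add_neg]

/-- `Qr z` is isomorphic to `Rz z`. -/
noncomputable def toRz (z : ℤ) : Qr z ≃+* Rz z := by
  refine RingEquiv.ofRingHom (fwd z) (AdjoinRoot.lift (Int.castRingHom (Qr z)) x hx)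
    (RingHom.ext fun r => ?_) (RingHom.ext fun p => ?_)
  swap
  · show AdjoinRoot.lift _ _ hx (fwd z p) = p
    rw [fwd_apply, map_add, map_mul, AdjoinRoot.lift_root]
    simp only [algebraMap_int_eq, eq_intCast, map_intCast]
    ext <;> simp [x]
  · show fwd z (AdjoinRoot.lift _ _ hx r) = r
    obtain ⟨g, rfl⟩ := AdjoinRoot.mk_surjective r
    rw [AdjoinRoot.lift_mk]
    induction g using Polynomial.induction_on' with
    | add p q hp hq => rw [eval₂_add, map_add, hp, hq, map_add]
    | monomial n c =>
        rw [← Polynomial.C_mul_X_pow_eq_monomial, eval₂_mul, eval₂_C, eval₂_pow, eval₂_X,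
          map_mul, map_pow, fwd_x, map_mul, map_pow, AdjoinRoot.mk_X, AdjoinRoot.mk_C]
        simp [eq_intCast, map_intCast, AdjoinRoot.algebraMap_eq]

section zmodHom

variable {G : Type*} [CommGroup G]

lemma pow_mod' {g : G} {n : ℕ} (hg : g ^ n = 1) (m : ℕ) : g ^ (m % n) = g ^ m := by
  conv_rhs => rw [← Nat.mod_add_div m n]
  rw [pow_add, pow_mul, hg, one_pow, mul_one]

/-- hom from `Multiplicative (ZMod n)` given an element killed by `n`. -/
def zmodHom (n : ℕ) [NeZero n] (g : G) (hg : g ^ n = 1) : Multiplicative (ZMod n) →* G where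
  toFun k := g ^ (Multiplicative.toAdd k).val
  map_one' := by simp
  map_mul' k l := by
    show g ^ ((Multiplicative.toAdd k + Multiplicative.toAdd l).val) = _
    rw [ZMod.val_add, pow_mod' hg, pow_add]

lemma zmodHom_apply (n : ℕ) [NeZero n] (g : G) (hg : g ^ n = 1) (k : ZMod n) :
    zmodHom n g hg (Multiplicative.ofAdd k) = g ^ k.val := rfl

end zmodHom

lemma case0 : Nonempty ((Qr 0)ˣ ≃* Multiplicative (ZMod 4)) := by
  have e2 : (x : Qr 0) ^ 2 = -1 := by ext <;> simp [pow_two, x]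
  have hx4' : (x : Qr 0) ^ 4 = 1 := by
    rw [show (x : Qr 0) ^ 4 = (x ^ 2) ^ 2 by ring, e2]; ext <;> simp
  have hx4 : (xU : (Qr 0)ˣ) ^ 4 = 1 := Units.ext (by
    rw [Units.val_pow_eq_pow_val, Units.val_one]; exact hx4')
  set φ := zmodHom 4 xU hx4 with hφ
  have hval : ∀ m : ℕ, ((xU ^ m : (Qr 0)ˣ) : Qr 0) = x ^ m := fun m => by
    exact (Units.val_pow_eq_pow_val _ _)
  have hinj : Function.Injective φ := by
    refine (injective_iff_map_eq_one φ).2 fun k hk => ?_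
    have h4 : ∀ m : ZMod 4, m = 0 ∨ m = 1 ∨ m = 2 ∨ m = 3 := by decide
    have hk' : xU ^ (Multiplicative.toAdd k).val = 1 := hk
    have hval' := congrArg (fun u : (Qr 0)ˣ => (u : Qr 0)) hk'
    simp only [hval, Units.val_one] at hval'
    rcases h4 (Multiplicative.toAdd k) with h | h | h | h
    · exact Multiplicative.toAdd.injective h
    · exfalso
      rw [h, show ((1 : ZMod 4)).val = 1 from rfl, pow_one] at hval'
      rw [ext_iff'] at hval'
      simp [x] at hval'
    · exfalso
      rw [h, show ((2 : ZMod 4)).val = 2 from rfl, e2] at hval'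
      rw [ext_iff'] at hval'
      simp at hval'
    · exfalso
      have e3 : (x : Qr 0) ^ 3 = -x := by rw [pow_succ, e2]; ring
      rw [h, show ((3 : ZMod 4)).val = 3 from rfl, e3] at hval'
      rw [ext_iff'] at hval'
      simp [x] at hval'
  have hsurj : Function.Surjective φ := by
    intro u
    have hN := norm_unit u
    set a := ((u : Qr 0)).a with ha
    set b := ((u : Qr 0)).b with hb
    have hN1 : a ^ 2 + b ^ 2 = 1 := by
      rcases hN with h | h
      · rw [N_apply] at h; linear_combination h
      · rw [N_apply] at h; exfalso; nlinarith [sq_nonneg a, sq_nonneg b]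
    have ha1 : a ≤ 1 := by nlinarith [sq_nonneg (a - 1), sq_nonneg b]
    have ha2 : -1 ≤ a := by nlinarith [sq_nonneg (a + 1), sq_nonneg b]
    have hb1 : b ≤ 1 := by nlinarith [sq_nonneg (b - 1), sq_nonneg a]
    have hb2 : -1 ≤ b := by nlinarith [sq_nonneg (b + 1), sq_nonneg a]
    have hcases : (a = 1 ∧ b = 0) ∨ (a = 0 ∧ b = 1) ∨ (a = -1 ∧ b = 0) ∨ (a = 0 ∧ b = -1) := by
      interval_cases a <;> interval_cases b <;> revert hN1 <;> norm_num
    have key : ∀ m : ℕ, (u : Qr 0) = x ^ m → ∃ k, φ k = u := by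
      intro m hm
      refine ⟨Multiplicative.ofAdd (m : ZMod 4), ?_⟩
      have : φ (Multiplicative.ofAdd (m : ZMod 4)) = xU ^ ((m : ZMod 4)).val :=
        zmodHom_apply _ _ _ _
      rw [this]
      refine Units.ext ?_
      rw [hval, hm]
      have : ((m : ZMod 4)).val = m % 4 := ZMod.val_natCast 4 m
      rw [this]
      have hx4' : (x : Qr 0) ^ 4 = 1 := by
        have := congrArg (fun u : (Qr 0)ˣ => (u : Qr 0)) hx4
        simpa [hval] using this
      conv_rhs => rw [← Nat.mod_add_div m 4]
      rw [pow_add, pow_mul, hx4', one_pow, mul_one]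
    rcases hcases with ⟨h1, h2⟩ | ⟨h1, h2⟩ | ⟨h1, h2⟩ | ⟨h1, h2⟩
    · exact key 0 (by rw [pow_zero]; rw [ext_iff']; exact ⟨by simp [← ha, h1], by simp [← hb, h2]⟩)
    · exact key 1 (by rw [pow_one]; rw [ext_iff']; exact ⟨by simp [x, ← ha, h1], by simp [x, ← hb, h2]⟩)
    · exact key 2 (by rw [e2]; rw [ext_iff']; exact ⟨by simp [← ha, h1], by simp [← hb, h2]⟩)
    · exact key 3 (by
        have e3 : (x : Qr 0) ^ 3 = -x := by rw [pow_succ, e2]; ring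
        rw [e3, ext_iff']; exact ⟨by simp [x, ← ha, h1], by simp [x, ← hb, h2]⟩)
  exact ⟨(MulEquiv.ofBijective φ ⟨hinj, hsurj⟩).symm⟩

lemma case1 : Nonempty ((Qr 1)ˣ ≃* Multiplicative (ZMod 6)) := by
  have ex1 : (x : Qr 1) ^ 2 = x - 1 := by simpa using (x_sq (z := 1))
  have e3 : (x : Qr 1) ^ 3 = -1 := by linear_combination (x + 1 : Qr 1) * ex1
  have e4 : (x : Qr 1) ^ 4 = -x := by linear_combination (x ^ 2 + x : Qr 1) * ex1
  have e5 : (x : Qr 1) ^ 5 = 1 - x := by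
    linear_combination (x ^ 3 + x ^ 2 - 1 : Qr 1) * ex1
  have hx6' : (x : Qr 1) ^ 6 = 1 := by
    rw [show (6 : ℕ) = 3 * 2 from rfl, pow_mul, e3]; ring
  have hx6 : (xU : (Qr 1)ˣ) ^ 6 = 1 := Units.ext (by
    rw [Units.val_pow_eq_pow_val, Units.val_one]; exact hx6')
  set φ := zmodHom 6 xU hx6 with hφ
  have hval : ∀ m : ℕ, ((xU ^ m : (Qr 1)ˣ) : Qr 1) = x ^ m := fun m =>
    Units.val_pow_eq_pow_val _ _
  have hinj : Function.Injective φ := by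
    refine (injective_iff_map_eq_one φ).2 fun k hk => ?_
    have h6 : ∀ m : ZMod 6, m = 0 ∨ m = 1 ∨ m = 2 ∨ m = 3 ∨ m = 4 ∨ m = 5 := by decide
    have hk' : xU ^ (Multiplicative.toAdd k).val = 1 := hk
    have hval' := congrArg (fun u : (Qr 1)ˣ => (u : Qr 1)) hk'
    simp only [hval, Units.val_one] at hval'
    rcases h6 (Multiplicative.toAdd k) with h | h | h | h | h | h
    · exact Multiplicative.toAdd.injective h
    · exfalso
      rw [h, show ((1 : ZMod 6)).val = 1 from rfl, pow_one] at hval'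
      rw [ext_iff'] at hval'; simp [x] at hval'
    · exfalso
      rw [h, show ((2 : ZMod 6)).val = 2 from rfl, ex1] at hval'
      rw [ext_iff'] at hval'; simp [x] at hval'
    · exfalso
      rw [h, show ((3 : ZMod 6)).val = 3 from rfl, e3] at hval'
      rw [ext_iff'] at hval'; simp at hval'
    · exfalso
      rw [h, show ((4 : ZMod 6)).val = 4 from rfl, e4] at hval'
      rw [ext_iff'] at hval'; simp [x] at hval'
    · exfalso
      rw [h, show ((5 : ZMod 6)).val = 5 from rfl, e5] at hval'
      rw [ext_iff'] at hval'; simp [x] at hval'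
  have hsurj : Function.Surjective φ := by
    intro u
    have hN := norm_unit u
    set a := ((u : Qr 1)).a with ha
    set b := ((u : Qr 1)).b with hb
    have hN1 : a ^ 2 + a * b + b ^ 2 = 1 := by
      rcases hN with h | h
      · rw [N_apply] at h; linear_combination h
      · rw [N_apply] at h; exfalso
        nlinarith [sq_nonneg (a + b), sq_nonneg a, sq_nonneg b]
    have h2 : (a + b) ^ 2 + a ^ 2 + b ^ 2 = 2 := by linear_combination 2 * hN1
    have ha1 : 2 * a ≤ 3 := by nlinarith [sq_nonneg (a - 1), sq_nonneg (a + b), sq_nonneg b]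
    have ha2 : -3 ≤ 2 * a := by nlinarith [sq_nonneg (a + 1), sq_nonneg (a + b), sq_nonneg b]
    have hb1 : 2 * b ≤ 3 := by nlinarith [sq_nonneg (b - 1), sq_nonneg (a + b), sq_nonneg a]
    have hb2 : -3 ≤ 2 * b := by nlinarith [sq_nonneg (b + 1), sq_nonneg (a + b), sq_nonneg a]
    have ha1' : a ≤ 1 := by omega
    have ha2' : -1 ≤ a := by omega
    have hb1' : b ≤ 1 := by omega
    have hb2' : -1 ≤ b := by omega
    have hcases : (a = 1 ∧ b = 0) ∨ (a = 0 ∧ b = 1) ∨ (a = -1 ∧ b = 1) ∨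
        (a = -1 ∧ b = 0) ∨ (a = 0 ∧ b = -1) ∨ (a = 1 ∧ b = -1) := by
      interval_cases a <;> interval_cases b <;> revert hN1 <;> norm_num
    have key : ∀ m : ℕ, (u : Qr 1) = x ^ m → ∃ k, φ k = u := by
      intro m hm
      refine ⟨Multiplicative.ofAdd (m : ZMod 6), ?_⟩
      rw [zmodHom_apply]
      refine Units.ext ?_
      rw [hval, hm, ZMod.val_natCast]
      conv_rhs => rw [← Nat.mod_add_div m 6]
      rw [pow_add, pow_mul, hx6', one_pow, mul_one]
    rcases hcases with ⟨h1, h2'⟩ | ⟨h1, h2'⟩ | ⟨h1, h2'⟩ | ⟨h1, h2'⟩ | ⟨h1, h2'⟩ | ⟨h1, h2'⟩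
    · exact key 0 (by rw [pow_zero, ext_iff']; exact ⟨by simp [← ha, h1], by simp [← hb, h2']⟩)
    · exact key 1 (by rw [pow_one, ext_iff']; exact ⟨by simp [x, ← ha, h1], by simp [x, ← hb, h2']⟩)
    · exact key 2 (by rw [ex1, ext_iff']; exact ⟨by simp [x, ← ha, h1], by simp [x, ← hb, h2']⟩)
    · exact key 3 (by rw [e3, ext_iff']; exact ⟨by simp [← ha, h1], by simp [← hb, h2']⟩)
    · exact key 4 (by rw [e4, ext_iff']; exact ⟨by simp [x, ← ha, h1], by simp [x, ← hb, h2']⟩)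
    · exact key 5 (by rw [e5, ext_iff']; exact ⟨by simp [x, ← ha, h1], by simp [x, ← hb, h2']⟩)
  exact ⟨(MulEquiv.ofBijective φ ⟨hinj, hsurj⟩).symm⟩

section ZxZ

variable {G : Type*} [CommGroup G]

/-- hom from `Multiplicative (ZMod 2 × ℤ)` given torsion `t` and generator `g`. -/
def ZxZhom (t g : G) (ht : t ^ 2 = 1) : Multiplicative (ZMod 2 × ℤ) →* G :=
  ((zmodHom 2 t ht).coprod (zpowersHom G g)).comp
    (MulEquiv.prodMultiplicative (ZMod 2) ℤ).toMonoidHom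

lemma ZxZhom_apply (t g : G) (ht : t ^ 2 = 1) (s : ZMod 2) (n : ℤ) :
    ZxZhom t g ht (Multiplicative.ofAdd (s, n)) = t ^ s.val * g ^ n := rfl

lemma ofAdd_fst_snd (k : Multiplicative (ZMod 2 × ℤ)) :
    k = Multiplicative.ofAdd
      ((Multiplicative.toAdd k).1, (Multiplicative.toAdd k).2) := by
  simp

end ZxZ

lemma case2 : Nonempty ((Qr 2)ˣ ≃* Multiplicative (ZMod 2 × ℤ)) := by
  have hinv : ((xU⁻¹ : (Qr 2)ˣ) : Qr 2) = ⟨2, -1⟩ := by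
    show ((N (x : Qr 2) : ℤ) : Qr 2) * conj x = _
    ext <;> simp [N_apply, conj, x]
  have hpow : ∀ n : ℤ, ((xU ^ n : (Qr 2)ˣ) : Qr 2) = ⟨1 - n, n⟩ := by
    intro n
    induction n using Int.induction_on with
    | zero => rw [zpow_zero, Units.val_one]; ext <;> simp
    | succ k ih =>
        rw [zpow_add_one, Units.val_mul, ih]
        ext <;> push_cast <;> simp [x] <;> ring
    | pred k ih =>
        rw [zpow_sub_one, Units.val_mul, ih, hinv]
        ext <;> push_cast <;> simp <;> ring
  have ht : ((-1 : (Qr 2)ˣ)) ^ 2 = 1 := by rw [neg_one_sq]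
  set φ := ZxZhom (-1) xU ht with hφ
  have h2 : ∀ m : ZMod 2, m = 0 ∨ m = 1 := by decide
  have hinj : Function.Injective φ := by
    refine (injective_iff_map_eq_one φ).2 fun k hk => ?_
    rw [ofAdd_fst_snd k, ZxZhom_apply] at hk
    set s := (Multiplicative.toAdd k).1 with hs
    set n := (Multiplicative.toAdd k).2 with hn
    rcases h2 s with h | h
    · rw [h, show ((0 : ZMod 2)).val = 0 from rfl, pow_zero, one_mul] at hk
      have := congrArg (fun u : (Qr 2)ˣ => (u : Qr 2)) hk
      simp only [hpow, Units.val_one] at this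
      rw [ext_iff'] at this
      have hn0 : n = 0 := by
        have := this.2; simpa using this
      rw [ofAdd_fst_snd k, ← hs, ← hn, h, hn0]
      rfl
    · exfalso
      rw [h, show ((1 : ZMod 2)).val = 1 from rfl, pow_one] at hk
      have := congrArg (fun u : (Qr 2)ˣ => (u : Qr 2)) hk
      simp only [Units.val_mul, Units.val_neg, Units.val_one, hpow] at this
      rw [ext_iff'] at this
      have h1 := this.1
      have h2' := this.2
      simp at h1 h2'
      omega
  have hsurj : Function.Surjective φ := by
    intro u
    have hN := norm_unit u
    set a := ((u : Qr 2)).a with ha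
    set b := ((u : Qr 2)).b with hb
    have hsq : (a + b) ^ 2 = 1 ∨ (a + b) ^ 2 = -1 := by
      rcases hN with h | h
      · left; rw [N_apply] at h; linear_combination h
      · right; rw [N_apply] at h; linear_combination h
    have hab : a + b = 1 ∨ a + b = -1 := by
      rcases hsq with h | h
      · have h' : (a + b - 1) * (a + b + 1) = 0 := by linear_combination h
        rcases mul_eq_zero.mp h' with h'' | h'' <;> omega
      · exfalso; nlinarith [sq_nonneg (a + b)]
    rcases hab with h | h
    · refine ⟨Multiplicative.ofAdd (0, b), ?_⟩
      rw [ZxZhom_apply, show ((0 : ZMod 2)).val = 0 from rfl, pow_zero, one_mul]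
      refine Units.ext ?_
      rw [hpow]
      rw [ext_iff']
      exact ⟨by simp; omega, by simp [hb]⟩
    · refine ⟨Multiplicative.ofAdd (1, -b), ?_⟩
      rw [ZxZhom_apply, show ((1 : ZMod 2)).val = 1 from rfl, pow_one]
      refine Units.ext ?_
      rw [Units.val_mul, Units.val_neg, Units.val_one, hpow]
      rw [ext_iff']
      constructor
      · simp; omega
      · simp [hb]
  exact ⟨(MulEquiv.ofBijective φ ⟨hinj, hsurj⟩).symm⟩

set_option maxHeartbeats 1600000 in
lemma case_ge3 (z : ℤ) (hz : 3 ≤ z) : Nonempty ((Qr z)ˣ ≃* Multiplicative (ZMod 2 × ℤ)) := by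
  have hzr : (3 : ℝ) ≤ (z : ℝ) := by exact_mod_cast hz
  have hs0 : (0 : ℝ) ≤ (z : ℝ) ^ 2 - 4 := by nlinarith
  set s : ℝ := Real.sqrt ((z : ℝ) ^ 2 - 4) with hsdef
  have hsnn : 0 ≤ s := Real.sqrt_nonneg _
  have hs2 : s ^ 2 = (z : ℝ) ^ 2 - 4 := Real.sq_sqrt hs0
  have hs : 2 < s := by nlinarith
  have hslt : s < (z : ℝ) := by nlinarith
  set α : ℝ := ((z : ℝ) + s) / 2 with hαdef
  set β : ℝ := ((z : ℝ) - s) / 2 with hβdef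
  have hsum : α + β = (z : ℝ) := by rw [hαdef, hβdef]; ring
  have hdiff : α - β = s := by rw [hαdef, hβdef]; ring
  have hab : α * β = 1 := by
    rw [hαdef, hβdef]; linear_combination (-(1 : ℝ)/4) * hs2
  have hα1 : 1 < α := by rw [hαdef]; nlinarith
  have hβpos : 0 < β := by rw [hβdef]; nlinarith
  have hβ1 : β < 1 := by nlinarith [hab, hα1, hβpos]
  have hα2 : α ^ 2 = (z : ℝ) * α - 1 := by linear_combination α * hsum - hab
  have hβ2 : β ^ 2 = (z : ℝ) * β - 1 := by linear_combination β * hsum - hab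
  set F : Qr z →* ℝ :=
    { toFun := fun p => (p.a : ℝ) + (p.b : ℝ) * α
      map_one' := by simp
      map_mul' := fun p q => by
        simp only [mul_a, mul_b]
        push_cast
        linear_combination (-(p.b : ℝ) * (q.b : ℝ)) * hα2 } with hFdef
  set Fβ : Qr z →* ℝ :=
    { toFun := fun p => (p.a : ℝ) + (p.b : ℝ) * β
      map_one' := by simp
      map_mul' := fun p q => by
        simp only [mul_a, mul_b]
        push_cast
        linear_combination (-(p.b : ℝ) * (q.b : ℝ)) * hβ2 } with hFβdef
  have hFapply : ∀ p : Qr z, F p = (p.a : ℝ) + (p.b : ℝ) * α := fun p => rfl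
  have hFβapply : ∀ p : Qr z, Fβ p = (p.a : ℝ) + (p.b : ℝ) * β := fun p => rfl
  have hNkey : ∀ p : Qr z, F p * Fβ p = (N p : ℝ) := fun p => by
    rw [hFapply, hFβapply, N_apply]
    push_cast
    linear_combination ((p.a : ℝ) * (p.b : ℝ)) * hsum + ((p.b : ℝ) ^ 2) * hab
  have hFneg : ∀ p : Qr z, F (-p) = -F p := fun p => by
    rw [hFapply, hFapply, neg_a, neg_b]; push_cast; ring
  have hdiffkey : ∀ p : Qr z, F p - Fβ p = (p.b : ℝ) * s := fun p => by
    rw [hFapply, hFβapply, ← hdiff]; ring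
  have hNpm : ∀ u : (Qr z)ˣ, F (u : Qr z) * Fβ (u : Qr z) = 1 ∨
      F (u : Qr z) * Fβ (u : Qr z) = -1 := by
    intro u
    rcases norm_unit u with h | h <;> [left; right] <;> rw [hNkey, h] <;> norm_num
  have hFinv : ∀ u : (Qr z)ˣ, F (u : Qr z) * F ((u⁻¹ : (Qr z)ˣ) : Qr z) = 1 := by
    intro u
    rw [← map_mul, ← Units.val_mul, mul_inv_cancel, Units.val_one, map_one]
  have hFβbound : ∀ u : (Qr z)ˣ, 1 < F (u : Qr z) →
      -1 < Fβ (u : Qr z) ∧ Fβ (u : Qr z) < 1 := by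
    intro u hu
    rcases hNpm u with h | h
    · constructor <;> nlinarith
    · constructor <;> nlinarith
  have hbge1 : ∀ u : (Qr z)ˣ, 1 < F (u : Qr z) → 1 ≤ ((u : Qr z)).b := by
    intro u hu
    obtain ⟨h1, h2⟩ := hFβbound u hu
    have hb : (((u : Qr z)).b : ℝ) * s = F (u : Qr z) - Fβ (u : Qr z) := (hdiffkey _).symm
    have hpos : (0 : ℝ) < (((u : Qr z)).b : ℝ) := by nlinarith
    have : 0 < ((u : Qr z)).b := by exact_mod_cast hpos
    omega
  have hcomp : ∀ u v : (Qr z)ˣ, 1 < F (u : Qr z) → 1 < F (v : Qr z) →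
      (((u : Qr z)).b < ((v : Qr z)).b ∨
        (((u : Qr z)).b = ((v : Qr z)).b ∧ ((u : Qr z)).a ≤ ((v : Qr z)).a)) →
      F (u : Qr z) ≤ F (v : Qr z) := by
    intro u v hu hv h
    obtain ⟨hu1, hu2⟩ := hFβbound u hu
    obtain ⟨hv1, hv2⟩ := hFβbound v hv
    have hbu : (((u : Qr z)).b : ℝ) * s = F (u : Qr z) - Fβ (u : Qr z) := (hdiffkey _).symm
    have hbv : (((v : Qr z)).b : ℝ) * s = F (v : Qr z) - Fβ (v : Qr z) := (hdiffkey _).symm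
    rcases h with h | ⟨h1, h2⟩
    · have hcast : (((u : Qr z)).b : ℝ) + 1 ≤ (((v : Qr z)).b : ℝ) := by exact_mod_cast h
      nlinarith
    · have ha : (((u : Qr z)).a : ℝ) ≤ (((v : Qr z)).a : ℝ) := by exact_mod_cast h2
      have hb : (((u : Qr z)).b : ℝ) = (((v : Qr z)).b : ℝ) := by exact_mod_cast h1
      rw [hFapply ((u : Qr z)), hFapply ((v : Qr z)), hb]
      linarith
  have hxU1 : 1 < F ((xU : (Qr z)ˣ) : Qr z) := by
    rw [xU_val, hFapply]
    simpa [x] using hα1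
  obtain ⟨b₀, hPb₀, hbleast⟩ :=
    Int.exists_least_of_bdd (P := fun b => ∃ u : (Qr z)ˣ, 1 < F (u : Qr z) ∧ ((u : Qr z)).b = b)
      ⟨1, fun b hb => by obtain ⟨u, hu, rfl⟩ := hb; exact hbge1 u hu⟩
      ⟨1, xU, hxU1, rfl⟩
  have hb₀1 : 1 ≤ b₀ := by
    obtain ⟨u, hu, hub⟩ := hPb₀
    rw [← hub]
    exact hbge1 u hu
  obtain ⟨u₁, hu₁, hu₁b⟩ := hPb₀
  obtain ⟨a₀, ⟨u₀, hu₀, hu₀b, hu₀a⟩, haleast⟩ :=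
    Int.exists_least_of_bdd
      (P := fun a => ∃ u : (Qr z)ˣ, 1 < F (u : Qr z) ∧ ((u : Qr z)).b = b₀ ∧ ((u : Qr z)).a = a)
      ⟨-b₀, fun a ha => by
        obtain ⟨u, hu, hb, rfl⟩ := ha
        obtain ⟨h1, h2⟩ := hFβbound u hu
        rw [hFβapply] at h1 h2
        have hbcast : (((u : Qr z)).b : ℝ) = (b₀ : ℝ) := by exact_mod_cast hb
        have hb1 : (1 : ℝ) ≤ (b₀ : ℝ) := by exact_mod_cast hb₀1
        have hr : (-1 : ℝ) - (b₀ : ℝ) < (((u : Qr z)).a : ℝ) := by nlinarith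
        have hzint : (-1 : ℤ) - b₀ < ((u : Qr z)).a := by exact_mod_cast hr
        omega⟩
      ⟨((u₁ : Qr z)).a, u₁, hu₁, hu₁b, rfl⟩
  have hmin : ∀ u : (Qr z)ˣ, 1 < F (u : Qr z) → F (u₀ : Qr z) ≤ F (u : Qr z) := by
    intro u hu
    rcases lt_or_ge b₀ ((u : Qr z)).b with h | h
    · exact hcomp u₀ u hu₀ hu (Or.inl (by rw [hu₀b]; exact h))
    · have hb_eq : ((u : Qr z)).b = b₀ := le_antisymm h (hbleast _ ⟨u, hu, rfl⟩)
      have ha_ge : a₀ ≤ ((u : Qr z)).a := haleast _ ⟨u, hu, hb_eq, rfl⟩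
      exact hcomp u₀ u hu₀ hu (Or.inr ⟨by rw [hu₀b, hb_eq], by rw [hu₀a]; exact ha_ge⟩)
  have hα₀pos : (0 : ℝ) < F (u₀ : Qr z) := by linarith
  have hFpow : ∀ (u : (Qr z)ˣ) (n : ℕ), F ((u ^ n : (Qr z)ˣ) : Qr z) = (F (u : Qr z)) ^ n := by
    intro u n; rw [Units.val_pow_eq_pow_val, map_pow]
  have hone : ∀ u : (Qr z)ˣ, F (u : Qr z) = 1 → u = 1 := by
    intro u h1
    have hβval : Fβ (u : Qr z) = 1 ∨ Fβ (u : Qr z) = -1 := by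
      rcases hNpm u with h | h <;> [left; right] <;> rw [h1, one_mul] at h <;> exact h
    have hbs : (((u : Qr z)).b : ℝ) * s = 1 - Fβ (u : Qr z) := by rw [← hdiffkey, h1]
    have hb0 : ((u : Qr z)).b = 0 := by
      rcases hβval with h | h
      · rw [h, sub_self] at hbs
        have hsne : s ≠ 0 := by linarith
        have : (((u : Qr z)).b : ℝ) = 0 := by
          rcases mul_eq_zero.mp hbs with h' | h'
          · exact h'
          · exact absurd h' hsne
        exact_mod_cast this
      · exfalso
        rw [h] at hbs
        rcases le_or_gt ((u : Qr z)).b 0 with hb | hb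
        · have : (((u : Qr z)).b : ℝ) ≤ 0 := by exact_mod_cast hb
          nlinarith
        · have : (1 : ℝ) ≤ (((u : Qr z)).b : ℝ) := by exact_mod_cast hb
          nlinarith
    have ha1 : ((u : Qr z)).a = 1 := by
      rw [hFapply] at h1
      have hbcast : (((u : Qr z)).b : ℝ) = 0 := by exact_mod_cast hb0
      rw [hbcast, zero_mul, add_zero] at h1
      exact_mod_cast h1
    exact Units.ext (by rw [ext_iff', Units.val_one]; exact ⟨by simpa using ha1, by simpa using hb0⟩)
  have hclass : ∀ u : (Qr z)ˣ, 1 ≤ F (u : Qr z) → ∃ n : ℕ, u = u₀ ^ n := by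
    intro u hu
    obtain ⟨m, hm⟩ := pow_unbounded_of_one_lt (F (u : Qr z)) hu₀
    have hP : ∃ n : ℕ, F (u : Qr z) < (F (u₀ : Qr z)) ^ (n + 1) :=
      ⟨m, lt_of_lt_of_le hm (pow_le_pow_right₀ (le_of_lt hu₀) (Nat.le_succ m))⟩
    classical
    set n := Nat.find hP with hn
    have hn1 : F (u : Qr z) < (F (u₀ : Qr z)) ^ (n + 1) := Nat.find_spec hP
    have hn2 : (F (u₀ : Qr z)) ^ n ≤ F (u : Qr z) := by
      rcases Nat.eq_zero_or_pos n with h | h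
      · rw [h, pow_zero]; exact hu
      · obtain ⟨k, hk⟩ : ∃ k, n = k + 1 := ⟨n - 1, by omega⟩
        have hmink := Nat.find_min hP (show k < n by omega)
        rw [hk]
        exact not_lt.mp hmink
    set v := u * (u₀ ^ n)⁻¹ with hv
    have hvu : v * u₀ ^ n = u := by rw [hv, inv_mul_cancel_right]
    have hFv : F (v : Qr z) * (F (u₀ : Qr z)) ^ n = F (u : Qr z) := by
      rw [← hFpow, ← map_mul, ← Units.val_mul, hvu]
    have hpowpos : (0 : ℝ) < (F (u₀ : Qr z)) ^ n := pow_pos hα₀pos n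
    have hv1 : 1 ≤ F (v : Qr z) := by
      by_contra hlt
      push_neg at hlt
      nlinarith
    have hv2 : F (v : Qr z) < F (u₀ : Qr z) := by
      by_contra hge
      push_neg at hge
      have h1 : F (u₀ : Qr z) * (F (u₀ : Qr z)) ^ n ≤ F (v : Qr z) * (F (u₀ : Qr z)) ^ n := by
        nlinarith
      rw [hFv, ← pow_succ'] at h1
      linarith
    rcases eq_or_lt_of_le hv1 with heq | hlt
    · exact ⟨n, by rw [← hvu, hone v heq.symm, one_mul]⟩
    · exact absurd (hmin v hlt) (by linarith)
  have hmain : ∀ u : (Qr z)ˣ, 0 < F (u : Qr z) → ∃ n : ℤ, u = u₀ ^ n := by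
    intro u hu
    rcases le_or_gt 1 (F (u : Qr z)) with h | h
    · obtain ⟨n, hn⟩ := hclass u h
      exact ⟨n, by rw [hn, zpow_natCast]⟩
    · have hinv := hFinv u
      have h1 : 1 ≤ F ((u⁻¹ : (Qr z)ˣ) : Qr z) := by nlinarith
      obtain ⟨n, hn⟩ := hclass _ h1
      refine ⟨-n, ?_⟩
      rw [zpow_neg, zpow_natCast, ← hn, inv_inv]
  have ht : ((-1 : (Qr z)ˣ)) ^ 2 = 1 := by rw [neg_one_sq]
  set φ := ZxZhom (-1) u₀ ht with hφ
  have h2 : ∀ m : ZMod 2, m = 0 ∨ m = 1 := by decide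
  set FU : (Qr z)ˣ →* ℝˣ := (F.comp (Units.coeHom (Qr z))).toHomUnits with hFU
  have hFUval : ∀ u : (Qr z)ˣ, ((FU u : ℝˣ) : ℝ) = F (u : Qr z) := fun u =>
    MonoidHom.coe_toHomUnits _ _
  have hFzpow : ∀ (u : (Qr z)ˣ) (n : ℤ), F ((u ^ n : (Qr z)ˣ) : Qr z) = (F (u : Qr z)) ^ n := by
    intro u n
    calc F ((u ^ n : (Qr z)ˣ) : Qr z) = ((FU (u ^ n) : ℝˣ) : ℝ) := (hFUval _).symm
      _ = (((FU u) ^ n : ℝˣ) : ℝ) := by rw [map_zpow]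
      _ = ((FU u : ℝˣ) : ℝ) ^ n := Units.val_zpow_eq_zpow_val _ _
      _ = (F (u : Qr z)) ^ n := by rw [hFUval]
  have hinj : Function.Injective φ := by
    refine (injective_iff_map_eq_one φ).2 fun k hk => ?_
    rw [ofAdd_fst_snd k, ZxZhom_apply] at hk
    rcases h2 (Multiplicative.toAdd k).1 with h | h
    · rw [h, show ((0 : ZMod 2)).val = 0 from rfl, pow_zero, one_mul] at hk
      have hF1 := congrArg (fun u : (Qr z)ˣ => F (u : Qr z)) hk
      simp only [Units.val_one, map_one] at hF1
      rw [hFzpow] at hF1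
      have hn0 : (Multiplicative.toAdd k).2 = 0 := by
        apply zpow_right_injective₀ hα₀pos (ne_of_gt hu₀)
        show F (u₀ : Qr z) ^ (Multiplicative.toAdd k).2 = F (u₀ : Qr z) ^ (0 : ℤ)
        rw [hF1, zpow_zero]
      rw [ofAdd_fst_snd k, h, hn0]
      rfl
    · exfalso
      rw [h, show ((1 : ZMod 2)).val = 1 from rfl, pow_one] at hk
      have h' : (u₀ : (Qr z)ˣ) ^ (Multiplicative.toAdd k).2 = -1 := by
        have := congrArg (fun w : (Qr z)ˣ => (-1 : (Qr z)ˣ) * w) hk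
        simpa [← mul_assoc] using this
      have hF1 := congrArg (fun u : (Qr z)ˣ => F (u : Qr z)) h'
      rw [hFzpow] at hF1
      have hneg : F (((-1 : (Qr z)ˣ)) : Qr z) = -1 := by
        rw [Units.val_neg, Units.val_one, hFneg, map_one]
      rw [hneg] at hF1
      have := zpow_pos hα₀pos (Multiplicative.toAdd k).2
      linarith
  have hsurj : Function.Surjective φ := by
    intro u
    have hFne : F (u : Qr z) ≠ 0 := by
      intro h0
      rcases hNpm u with h | h <;> rw [h0, zero_mul] at h <;> norm_num at h
    rcases hFne.lt_or_gt with hneg | hpos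
    · have hpos' : 0 < F ((-u : (Qr z)ˣ) : Qr z) := by
        rw [Units.val_neg, hFneg]; linarith
      obtain ⟨n, hn⟩ := hmain (-u) hpos'
      refine ⟨Multiplicative.ofAdd (1, n), ?_⟩
      rw [ZxZhom_apply, show ((1 : ZMod 2)).val = 1 from rfl, pow_one, ← hn,
        neg_one_mul, neg_neg]
    · obtain ⟨n, hn⟩ := hmain u hpos
      refine ⟨Multiplicative.ofAdd (0, n), ?_⟩
      rw [ZxZhom_apply, show ((0 : ZMod 2)).val = 0 from rfl, pow_zero, one_mul, ← hn]
  exact ⟨(MulEquiv.ofBijective φ ⟨hinj, hsurj⟩).symm⟩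

end Qr

/-- transfer of the unit group along the ring equivalence -/
noncomputable def QrUnitsEquiv (z : ℤ) : (Rz z)ˣ ≃* (Qr z)ˣ :=
  Units.mapEquiv (Qr.toRz z).symm.toMulEquiv

theorem stmt7 (z : ℤ) :
    (z = 0 → Nonempty ((Rz z)ˣ ≃* Multiplicative (ZMod 4))) ∧
    ((z = 1 ∨ z = -1) → Nonempty ((Rz z)ˣ ≃* Multiplicative (ZMod 6))) ∧
    (2 ≤ |z| → Nonempty ((Rz z)ˣ ≃* Multiplicative (ZMod 2 × ℤ))) := by
  refine ⟨fun h => ?_, fun h => ?_, fun h => ?_⟩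
  · subst h
    obtain ⟨e⟩ := Qr.case0
    exact ⟨(QrUnitsEquiv 0).trans e⟩
  · rcases h with rfl | rfl
    · obtain ⟨e⟩ := Qr.case1
      exact ⟨(QrUnitsEquiv 1).trans e⟩
    · obtain ⟨e⟩ := Qr.case1
      exact ⟨((QrUnitsEquiv (-1)).trans
        (Units.mapEquiv (Qr.negEquiv 1).toMulEquiv).symm).trans e⟩
  · rcases le_or_gt 0 z with hz0 | hz0
    · have h2 : 2 ≤ z := by rwa [abs_of_nonneg hz0] at h
      have base : Nonempty ((Qr z)ˣ ≃* Multiplicative (ZMod 2 × ℤ)) := by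
        rcases h2.eq_or_lt with heq | h3
        · obtain rfl := heq.symm
          exact Qr.case2
        · exact Qr.case_ge3 z (by omega)
      obtain ⟨e⟩ := base
      exact ⟨(QrUnitsEquiv z).trans e⟩
    · have h2 : 2 ≤ -z := by rw [abs_of_neg hz0] at h; omega
      obtain ⟨w, rfl⟩ : ∃ w, z = -w := ⟨-z, by omega⟩
      have hw : 2 ≤ w := by omega
      have base : Nonempty ((Qr w)ˣ ≃* Multiplicative (ZMod 2 × ℤ)) := by
        rcases hw.eq_or_lt with heq | h3
        · obtain rfl := heq.symm
          exact Qr.case2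
        · exact Qr.case_ge3 w (by omega)
      obtain ⟨e⟩ := base
      exact ⟨((QrUnitsEquiv (-w)).trans
        (Units.mapEquiv (Qr.negEquiv w).toMulEquiv).symm).trans e⟩
end

section
/- For z : ℤ: there exist x y : ℤ with x^2 + z*x*y + y^2 = -1 if and only if z = 3 or z = -3. Moreover, if z = 3 or z = -3, then for every M : ℤ, (∃ x y : ℤ, x^2 + z*x*y + y^2 = M) ↔ (∃ x y : ℤ, x^2 + z*x*y + y^2 = -M). -/
/-!
The form `x² + zxy + y²` is the norm form of `ℤ[ω]` with `ω² + zω + 1 = 0`, so its values are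
closed under multiplication; once it represents `-1`, multiplying by `-1` swaps `M` and `-M`.

If `x² + zxy + y² = -1`, then `xy ≠ 0`, and passing to `|x|, |y|` gives `a² - wab + b² = -1` with
`a, b > 0` and `w = ±z`. Vieta jumping `(a, b) ↦ (b, wb - a)` strictly decreases the larger entry
while keeping both positive, until `a = b`, where `(w - 2) a² = 1` forces `w = 3`.
-/

def Represents (z M : ℤ) : Prop := ∃ x y : ℤ, x ^ 2 + z * x * y + y ^ 2 = M

theorem Represents.mul {z M N : ℤ} (hM : Represents z M) (hN : Represents z N) :
    Represents z (M * N) := by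
  obtain ⟨x, y, rfl⟩ := hM
  obtain ⟨a, b, rfl⟩ := hN
  exact ⟨x * a - y * b, x * b + y * a + z * y * b, by ring⟩

theorem Represents.neg {z M : ℤ} (hz : Represents z (-1)) (hM : Represents z M) :
    Represents z (-M) := by
  simpa using hM.mul hz

theorem represents_iff_represents_neg {z M : ℤ} (hz : Represents z (-1)) :
    Represents z M ↔ Represents z (-M) :=
  ⟨hz.neg, fun h => by simpa using hz.neg h⟩

theorem eq_three_of_sq_sub_mul_add_sq_eq_neg_one_of_le {z x y : ℤ} (hy : 0 < y) (hyx : y ≤ x)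
    (h : x ^ 2 - z * x * y + y ^ 2 = -1) : z = 3 := by
  induction hn : x.toNat using Nat.strong_induction_on generalizing x y with
  | _ n ih =>
  rcases hyx.eq_or_lt with rfl | hyx
  · have hz : (z - 2) * y ^ 2 = 1 := by linear_combination -h
    have := Int.eq_one_of_mul_eq_one_right (by nlinarith) hz
    linarith
  · -- `z * y - x` is the other root of `t ^ 2 - z * y * t + y ^ 2 + 1`, besides `x`.
    have hprod : x * (z * y - x) = y ^ 2 + 1 := by linear_combination -h
    have hpos : 0 < z * y - x := by nlinarith
    have hle : z * y - x ≤ y := by nlinarith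
    exact ih y.toNat (by omega) hpos hle (by linear_combination h) rfl

theorem eq_three_of_sq_sub_mul_add_sq_eq_neg_one {z x y : ℤ} (hx : 0 < x) (hy : 0 < y)
    (h : x ^ 2 - z * x * y + y ^ 2 = -1) : z = 3 := by
  rcases le_total y x with hyx | hxy
  · exact eq_three_of_sq_sub_mul_add_sq_eq_neg_one_of_le hy hyx h
  · exact eq_three_of_sq_sub_mul_add_sq_eq_neg_one_of_le hx hxy (by linear_combination h)

theorem represents_neg_one_iff {z : ℤ} : Represents z (-1) ↔ z = 3 ∨ z = -3 := by
  constructor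
  · rintro ⟨x, y, h⟩
    have hx : x ≠ 0 := by rintro rfl; nlinarith
    have hy : y ≠ 0 := by rintro rfl; nlinarith
    have habs : |x| * |y| = |x * y| := (abs_mul x y).symm
    rcases lt_or_gt_of_ne (mul_ne_zero hx hy) with hxy | hxy
    · left
      refine eq_three_of_sq_sub_mul_add_sq_eq_neg_one (abs_pos.2 hx) (abs_pos.2 hy) ?_
      rw [sq_abs, sq_abs, mul_assoc, habs, abs_of_neg hxy]
      linear_combination h
    · right
      have : -z = 3 := by
        refine eq_three_of_sq_sub_mul_add_sq_eq_neg_one (abs_pos.2 hx) (abs_pos.2 hy) ?_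
        rw [sq_abs, sq_abs, mul_assoc, habs, abs_of_pos hxy]
        linear_combination h
      linarith
  · rintro (rfl | rfl)
    · exact ⟨1, -1, by norm_num⟩
    · exact ⟨1, 1, by norm_num⟩

theorem stmt8 (z : ℤ) :
    ((∃ x y : ℤ, x ^ 2 + z * x * y + y ^ 2 = -1) ↔ (z = 3 ∨ z = -3)) ∧
    ((z = 3 ∨ z = -3) → ∀ M : ℤ,
      (∃ x y : ℤ, x ^ 2 + z * x * y + y ^ 2 = M) ↔
      (∃ x y : ℤ, x ^ 2 + z * x * y + y ^ 2 = -M)) :=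
  ⟨represents_neg_one_iff, fun hz _ => represents_iff_represents_neg (represents_neg_one_iff.2 hz)⟩
end

section
/- Let z : ℤ, let p : ℤ be prime, and let a b : ℤ with a^2 + z*a*b + b^2 = p or a^2 + z*a*b + b^2 = -p. If c d : ℤ satisfy p ∣ c^2 + z*c*d + d^2, then in R_z := AdjoinRoot (X^2 - C z * X + 1 : ℤ[X]) either (a + b•ω) ∣ (c + d•ω) or ((a + z*b) - b•ω) ∣ (c + d•ω). -/
open Polynomial

noncomputable abbrev omegaZ (z : ℤ) : Rz z :=
  AdjoinRoot.root (X ^ 2 - C z * X + 1 : ℤ[X])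

/-! Write π = a + bω, π̄ = (a + zb) - bω and α = c + dω, so that ππ̄ = ±p. The identity
(ad - bc)(ad + bc + zbd) = d²N(π) - b²N(α) shows that p divides the ω-coordinate of π̄α or of πα.
Since the norm is multiplicative, p then divides the other coordinate as well, so p ∣ π̄α (resp.
p ∣ πα) in R_z. As R_z is a free ℤ-module, p is regular there and can be cancelled from
ππ̄α = ±pα, giving π ∣ α (resp. π̄ ∣ α). -/

theorem dvd_of_associated_mul_of_dvd_mul {M : Type*} [CommMonoid M] {q x y w : M}
    (hq : IsLeftRegular q) (hxy : Associated (x * y) q) (h : q ∣ y * w) : x ∣ w := by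
  obtain ⟨u, hu⟩ := hxy
  obtain ⟨v, hv⟩ := h
  refine ⟨u * v, hq ?_⟩
  calc q * w = x * u * (y * w) := by rw [← hu]; ac_rfl
    _ = q * (x * (u * v)) := by rw [hv]; ac_rfl

theorem Prime.dvd_of_dvd_sq_add_mul_add_sq {R : Type*} [CommRing R] {p x y z : R} (hp : Prime p)
    (hN : p ∣ x ^ 2 + z * x * y + y ^ 2) (hy : p ∣ y) : p ∣ x := by
  refine hp.dvd_of_dvd_pow (n := 2) ?_
  have hxy : x ^ 2 = (x ^ 2 + z * x * y + y ^ 2) - y * (z * x + y) := by ring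
  rw [hxy]
  exact dvd_sub hN (hy.mul_right _)

theorem AdjoinRoot.isLeftRegular_intCast {f : ℤ[X]} (hf : f.Monic) {p : ℤ} (hp : p ≠ 0) :
    IsLeftRegular (p : AdjoinRoot f) := by
  have : Module.Free ℤ (AdjoinRoot f) := hf.free_adjoinRoot
  have hreg : IsSMulRegular ℤ p := fun x y h => mul_left_cancel₀ hp h
  exact hreg.of_flat (S := AdjoinRoot f)

namespace Rz

theorem omegaZ_sq (z : ℤ) : omegaZ z ^ 2 = z * omegaZ z - 1 := by
  have h := AdjoinRoot.mk_self (f := (X ^ 2 - C z * X + 1 : ℤ[X]))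
  simp only [map_add, map_sub, map_mul, map_pow, AdjoinRoot.mk_X, map_one, map_intCast,
    eq_intCast] at h
  linear_combination h

theorem intCast_add_smul_mul (z a b c d : ℤ) :
    ((a : Rz z) + b • omegaZ z) * ((c : Rz z) + d • omegaZ z) =
      ((a * c - b * d : ℤ) : Rz z) + (a * d + b * c + z * b * d) • omegaZ z := by
  simp only [zsmul_eq_mul]
  push_cast
  linear_combination ((b : Rz z) * d) * omegaZ_sq z

theorem mul_conj (z a b : ℤ) :
    ((a : Rz z) + b • omegaZ z) * (((a + z * b : ℤ) : Rz z) - b • omegaZ z) =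
      ((a ^ 2 + z * a * b + b ^ 2 : ℤ) : Rz z) := by
  simp only [zsmul_eq_mul]
  push_cast
  linear_combination (-(b : Rz z) ^ 2) * omegaZ_sq z

theorem intCast_dvd_intCast_add_smul (z : ℤ) {p c d : ℤ} (hc : p ∣ c) (hd : p ∣ d) :
    (p : Rz z) ∣ (c : Rz z) + d • omegaZ z := by
  obtain ⟨c, rfl⟩ := hc
  obtain ⟨d, rfl⟩ := hd
  exact ⟨c + d • omegaZ z, by simp only [zsmul_eq_mul]; push_cast; ring⟩

theorem conj_dvd_of_dvd_omegaCoeff_mul {z p a b c d : ℤ} (hp : Prime p)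
    (hab : Associated (a ^ 2 + z * a * b + b ^ 2) p) (hcd : p ∣ c ^ 2 + z * c * d + d ^ 2)
    (h : p ∣ a * d + b * c + z * b * d) :
    (((a + z * b : ℤ) : Rz z) - b • omegaZ z) ∣ (c : Rz z) + d • omegaZ z := by
  have hnorm : p ∣ (a * c - b * d) ^ 2 + z * (a * c - b * d) * (a * d + b * c + z * b * d) +
      (a * d + b * c + z * b * d) ^ 2 := by
    have norm_mul : (a * c - b * d) ^ 2 + z * (a * c - b * d) * (a * d + b * c + z * b * d) +
        (a * d + b * c + z * b * d) ^ 2 =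
          (a ^ 2 + z * a * b + b ^ 2) * (c ^ 2 + z * c * d + d ^ 2) := by ring
    rw [norm_mul]
    exact hcd.mul_left _
  have hdvd : (p : Rz z) ∣ ((a : Rz z) + b • omegaZ z) * ((c : Rz z) + d • omegaZ z) := by
    rw [intCast_add_smul_mul]
    exact intCast_dvd_intCast_add_smul z (hp.dvd_of_dvd_sq_add_mul_add_sq hnorm h) h
  refine dvd_of_associated_mul_of_dvd_mul (AdjoinRoot.isLeftRegular_intCast (by monicity!) hp.ne_zero) ?_ hdvd
  rw [mul_comm (((a + z * b : ℤ) : Rz z) - b • omegaZ z), mul_conj]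
  exact hab.map (Int.castRingHom (Rz z))

theorem dvd_of_dvd_omegaCoeff_conj_mul {z p a b c d : ℤ} (hp : Prime p)
    (hab : Associated (a ^ 2 + z * a * b + b ^ 2) p) (hcd : p ∣ c ^ 2 + z * c * d + d ^ 2)
    (h : p ∣ a * d - b * c) :
    ((a : Rz z) + b • omegaZ z) ∣ (c : Rz z) + d • omegaZ z := by
  have hab' : Associated ((a + z * b) ^ 2 + z * (a + z * b) * (-b) + (-b) ^ 2) p := by
    rwa [show (a + z * b) ^ 2 + z * (a + z * b) * (-b) + (-b) ^ 2 = a ^ 2 + z * a * b + b ^ 2 by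
      ring]
  have h' : p ∣ (a + z * b) * d + (-b) * c + z * (-b) * d := by
    rwa [show (a + z * b) * d + (-b) * c + z * (-b) * d = a * d - b * c by ring]
  have hconj : (((a + z * b + z * -b : ℤ) : Rz z) - (-b) • omegaZ z) = a + b • omegaZ z := by
    rw [show a + z * b + z * -b = a by ring, neg_smul, sub_neg_eq_add]
  simpa only [hconj] using conj_dvd_of_dvd_omegaCoeff_mul hp hab' hcd h'

end Rz

theorem stmt10 (z p : ℤ) (hp : Prime p) (a b : ℤ)
    (hab : a ^ 2 + z * a * b + b ^ 2 = p ∨ a ^ 2 + z * a * b + b ^ 2 = -p)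
    (c d : ℤ) (hcd : p ∣ c ^ 2 + z * c * d + d ^ 2) :
    ((a : Rz z) + b • omegaZ z) ∣ ((c : Rz z) + d • omegaZ z) ∨
      (((a + z * b : ℤ) : Rz z) - b • omegaZ z) ∣ ((c : Rz z) + d • omegaZ z) := by
  have hN : Associated (a ^ 2 + z * a * b + b ^ 2) p := Int.associated_iff.mpr hab
  have hprod : p ∣ (a * d - b * c) * (a * d + b * c + z * b * d) := by
    have h : (a * d - b * c) * (a * d + b * c + z * b * d) =
        d ^ 2 * (a ^ 2 + z * a * b + b ^ 2) - b ^ 2 * (c ^ 2 + z * c * d + d ^ 2) := by ring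
    rw [h]
    exact dvd_sub (hN.symm.dvd.mul_left _) (hcd.mul_left _)
  exact (hp.dvd_or_dvd hprod).imp (Rz.dvd_of_dvd_omegaCoeff_conj_mul hp hN hcd)
    (Rz.conj_dvd_of_dvd_omegaCoeff_mul hp hN hcd)
end

section
/- Let z : ℤ, let p : ℤ be prime, and let a b : ℤ with a^2 + z*a*b + b^2 = p or a^2 + z*a*b + b^2 = -p. Then a + b•ω is a prime element of R_z := AdjoinRoot (X^2 - C z * X + 1 : ℤ[X]) (i.e. Prime (a + b•ω) holds). In words: the irreducible factors of irregular elements in ℤ[i_z] are prime elements. -/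
open Polynomial

theorem stmt11 (z p : ℤ) (hp : Prime p) (a b : ℤ)
    (hab : a ^ 2 + z * a * b + b ^ 2 = p ∨ a ^ 2 + z * a * b + b ^ 2 = -p) :
    Prime ((a : Rz z) + b • omegaZ z) := by
  have hmonic : (X ^ 2 - C z * X + 1 : ℤ[X]).Monic := by monicity!
  set ω : Rz z := omegaZ z with hωdef
  set α : Rz z := (a : Rz z) + b • ω with hα
  -- root relation
  have hω : ω ^ 2 = (z : Rz z) * ω - 1 := by
    have h : (AdjoinRoot.mk (X ^ 2 - C z * X + 1 : ℤ[X])) (X ^ 2 - C z * X + 1) = 0 :=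
      AdjoinRoot.mk_self
    simp only [map_add, map_sub, map_mul, map_pow, map_one, AdjoinRoot.mk_X] at h
    have h2 : (AdjoinRoot.mk (X ^ 2 - C z * X + 1 : ℤ[X])) (C z) = (z : Rz z) := by
      simp [AdjoinRoot.mk_C, algebraMap_int_eq]
    rw [h2] at h
    linear_combination h
  -- norm identity
  have hNorm : α * (((a + z * b : ℤ) : Rz z) - b • ω)
      = ((a ^ 2 + z * a * b + b ^ 2 : ℤ) : Rz z) := by
    rw [hα]
    push_cast
    simp only [zsmul_eq_mul]
    linear_combination (-(b : Rz z) * b) * hω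
  -- p does not divide b
  have hpN : p ∣ a ^ 2 + z * a * b + b ^ 2 := by
    rcases hab with h | h <;> rw [h] <;> simp
  have hpb : ¬ p ∣ b := by
    intro hb
    have ha2 : p ∣ a ^ 2 := by
      have h1 : p ∣ z * a * b + b ^ 2 :=
        dvd_add (Dvd.dvd.mul_left hb _) (Dvd.dvd.pow hb (by norm_num))
      have := dvd_sub hpN h1
      simpa using this
    have ha : p ∣ a := hp.dvd_of_dvd_pow ha2
    have hpp : p * p ∣ a ^ 2 + z * a * b + b ^ 2 := by
      have h1 : p * p ∣ a ^ 2 := by rw [sq]; exact mul_dvd_mul ha ha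
      have h2 : p * p ∣ z * a * b := by
        obtain ⟨u, hu⟩ := ha; obtain ⟨v, hv⟩ := hb
        exact ⟨z * u * v, by rw [hu, hv]; ring⟩
      have h3 : p * p ∣ b ^ 2 := by rw [sq]; exact mul_dvd_mul hb hb
      exact dvd_add (dvd_add h1 h2) h3
    have hppp : p * p ∣ p := by
      rcases hab with h | h <;> rw [h] at hpp <;> simpa using hpp
    obtain ⟨k, hk⟩ := hppp
    have hp0 : p ≠ 0 := hp.ne_zero
    have h1 : p * 1 = p * (p * k) := by linarith
    exact hp.not_isUnit (IsUnit.of_mul_eq_one _ (mul_left_cancel₀ hp0 h1).symm)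
  -- residue field
  set n : ℕ := p.natAbs with hn
  have hnp : Fact (Nat.Prime n) := ⟨Int.prime_iff_natAbs_prime.mp hp⟩
  have hdvd_iff : ∀ m : ℤ, ((m : ZMod n) = 0) ↔ p ∣ m := by
    intro m
    rw [ZMod.intCast_zmod_eq_zero_iff_dvd, hn, Int.natAbs_dvd]
  have hbK : ((b : ZMod n)) ≠ 0 := fun h => hpb ((hdvd_iff b).mp h)
  have hb1 : (b : ZMod n) * (b : ZMod n)⁻¹ = 1 := mul_inv_cancel₀ hbK
  have hNK : ((a : ZMod n)) ^ 2 + z * a * b + b ^ 2 = 0 := by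
    have := (hdvd_iff _).mpr hpN
    push_cast at this
    exact this
  set t : ZMod n := -(a : ZMod n) * (b : ZMod n)⁻¹ with ht
  have heval : eval₂ (Int.castRingHom (ZMod n)) t (X ^ 2 - C z * X + 1) = 0 := by
    simp only [eval₂_add, eval₂_sub, eval₂_mul, eval₂_pow, eval₂_X, eval₂_C, eval₂_one,
      Int.coe_castRingHom, ht]
    linear_combination ((b : ZMod n)⁻¹) ^ 2 * hNK
      + (-1 : ZMod n) * ((z : ZMod n) * a * (b : ZMod n)⁻¹ + 1 + (b : ZMod n) * (b : ZMod n)⁻¹) * hb1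
  set φ : Rz z →+* ZMod n := AdjoinRoot.lift (Int.castRingHom (ZMod n)) t heval with hφ
  have hφω : φ ω = t := AdjoinRoot.lift_root heval
  have hφint : ∀ m : ℤ, φ (m : Rz z) = (m : ZMod n) := fun m => map_intCast φ m
  have hφα : φ α = 0 := by
    rw [hα, map_add, map_zsmul, hφω, hφint, zsmul_eq_mul, ht]
    field_simp
    ring
  -- α divides p
  have hαp : α ∣ ((p : ℤ) : Rz z) := by
    rcases hab with h | h
    · rw [h] at hNorm
      exact ⟨_, hNorm.symm⟩
    · rw [h] at hNorm
      have hdvd : α ∣ ((-p : ℤ) : Rz z) := ⟨_, hNorm.symm⟩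
      push_cast at hdvd ⊢
      exact dvd_neg.mp hdvd
  -- kernel of φ is (α)
  have hker : ∀ x : Rz z, φ x = 0 → α ∣ x := by
    intro x hx
    obtain ⟨q, rfl⟩ := AdjoinRoot.mk_surjective x
    set r := q %ₘ (X ^ 2 - C z * X + 1) with hr
    have hdeg2 : (X ^ 2 - C z * X + 1 : ℤ[X]).degree = 2 := by compute_degree!
    have hdeg : r.degree < 2 := by
      rw [← hdeg2]; exact degree_modByMonic_lt q hmonic
    have hdeg1 : r.natDegree ≤ 1 := by
      rcases eq_or_ne r 0 with h | h
      · simp [h]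
      · have h2 : r.degree < ((2 : ℕ) : WithBot ℕ) := by exact_mod_cast hdeg
        have := (natDegree_lt_iff_degree_lt h).mpr h2
        omega
    have hrepr : r = C (r.coeff 1) * X + C (r.coeff 0) := eq_X_add_C_of_natDegree_le_one hdeg1
    set c : ℤ := r.coeff 0 with hc0
    set d : ℤ := r.coeff 1 with hd0
    have hmod : AdjoinRoot.mk (X ^ 2 - C z * X + 1 : ℤ[X]) q
        = AdjoinRoot.mk (X ^ 2 - C z * X + 1 : ℤ[X]) r := by
      conv_lhs => rw [← modByMonic_add_div q (X ^ 2 - C z * X + 1)]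
      rw [map_add, map_mul, AdjoinRoot.mk_self, zero_mul, add_zero]
    have hxcd : AdjoinRoot.mk (X ^ 2 - C z * X + 1 : ℤ[X]) q = (c : Rz z) + d • ω := by
      rw [hmod]
      conv_lhs => rw [hrepr]
      simp only [map_add, map_mul, AdjoinRoot.mk_X, AdjoinRoot.mk_C, algebraMap_int_eq,
        eq_intCast, zsmul_eq_mul, map_intCast]
      ring
    rw [hxcd] at hx ⊢
    rw [map_add, map_zsmul, hφω, hφint, zsmul_eq_mul] at hx
    have hcd : ((c * b - d * a : ℤ) : ZMod n) = 0 := by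
      push_cast
      rw [ht] at hx
      linear_combination (b : ZMod n) * hx + (d : ZMod n) * a * hb1
    have hpcd : p ∣ c * b - d * a := (hdvd_iff _).mp hcd
    obtain ⟨s, hs⟩ := ZMod.intCast_surjective ((d : ZMod n) * (b : ZMod n)⁻¹)
    have h1 : p ∣ d - s * b := by
      rw [← hdvd_iff]
      push_cast
      rw [hs]
      linear_combination (-(d : ZMod n)) * hb1
    have h2 : p ∣ c - s * a := by
      have hb2 : p ∣ b * (c - s * a) := by
        have he : b * (c - s * a) = (c * b - d * a) + a * (d - s * b) := by ring
        rw [he]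
        exact dvd_add hpcd (Dvd.dvd.mul_left h1 _)
      exact (hp.dvd_mul.mp hb2).resolve_left hpb
    obtain ⟨u, hu⟩ := h2
    obtain ⟨v, hv⟩ := h1
    have hcs : c = s * a + p * u := by linarith
    have hds : d = s * b + p * v := by linarith
    have hdecomp : (c : Rz z) + d • ω
        = (s : Rz z) * α + ((p : ℤ) : Rz z) * ((u : Rz z) + (v : Rz z) * ω) := by
      rw [hcs, hds, hα]
      push_cast
      simp only [zsmul_eq_mul]
      push_cast
      ring
    rw [hdecomp]
    exact dvd_add (Dvd.dvd.mul_left dvd_rfl _) ((hαp).mul_right _)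
  -- α ≠ 0
  have hα0 : α ≠ 0 := by
    intro h0
    have hnt : Nontrivial (Rz z) := φ.domain_nontrivial
    have hfree : Module.Free ℤ (Rz z) := Module.Free.of_basis (AdjoinRoot.powerBasis' hmonic).basis
    have hNz : ((a ^ 2 + z * a * b + b ^ 2 : ℤ) : Rz z) = 0 := by
      rw [← hNorm, h0, zero_mul]
    have hsm : ((a ^ 2 + z * a * b + b ^ 2 : ℤ)) • (1 : Rz z) = 0 := by
      rw [zsmul_eq_mul, mul_one]; exact hNz
    rcases smul_eq_zero.mp hsm with h | h
    · rcases hab with he | he <;> rw [he] at h <;> simp [hp.ne_zero] at h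
    · exact one_ne_zero h
  -- α not a unit
  have hαu : ¬ IsUnit α := by
    intro h
    have := h.map φ
    rw [hφα] at this
    exact (not_isUnit_zero : ¬ IsUnit (0 : ZMod n)) this
  refine ⟨hα0, hαu, fun x y hxy => ?_⟩
  have hz : φ x * φ y = 0 := by
    obtain ⟨cc, hcc⟩ := hxy
    rw [← map_mul, hcc, map_mul, hφα, zero_mul]
  rcases mul_eq_zero.mp hz with h | h
  · exact Or.inl (hker x h)
  · exact Or.inr (hker y h)
end

section
/- Let z M : ℤ with 2 - |z| < M < 2 + |z|. Then there exist x y : ℤ with x^2 + z*x*y + y^2 = M if and only if M = k^2 for some k : ℤ. In particular, for every prime p : ℤ with 2 - |z| < p < 2 + |z| the equation x^2 + z*x*y + y^2 = p has no integer solution; and every prime p : ℤ with |p| < |z| - 2 is irreducible as an element of R_z := AdjoinRoot (X^2 - C z * X + 1 : ℤ[X]). -/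
set_option maxHeartbeats 1000000

open Polynomial

namespace Stmt14Aux

lemma ineq1 (z a b : ℤ) (hb : 1 ≤ b) (hab : b ≤ a) (h2a : 2*a ≤ z*b) :
    a^2 + b^2 + z ≤ z*(a*b) + 2 := by
  rcases hab.eq_or_lt with rfl | hba
  · have hz2 : 2 ≤ z := by nlinarith
    nlinarith [mul_nonneg (by linarith : (0:ℤ) ≤ z - 2) (by nlinarith : (0:ℤ) ≤ b^2 - 1)]
  · rcases hb.eq_or_lt with rfl | hb2
    · nlinarith [mul_nonneg (by linarith : (0:ℤ) ≤ a - 1) (by linarith : (0:ℤ) ≤ z - a - 1)]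
    · have h1 : 0 ≤ (z*b - 2*a)*(a-1) := mul_nonneg (by linarith) (by linarith)
      have h2 : 0 ≤ (z*b - 2*a)*(b-1) := mul_nonneg (by linarith) (by linarith)
      have h3 : 0 ≤ b*((a-b-1)*(a+b)) := mul_nonneg (by linarith) (mul_nonneg (by linarith) (by linarith))
      nlinarith [h1, h2, h3, mul_pos (by linarith : (0:ℤ) < b) (by linarith : (0:ℤ) < a)]

lemma core (z M : ℤ) (hz : 1 ≤ z) (h1 : 2 - z < M) (h2 : M < 2 + z) :
    ∀ n : ℕ, ∀ x y : ℤ, (x^2+y^2).toNat = n → y^2 ≤ x^2 → x^2+z*x*y+y^2 = M →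
    ∃ k, M = k^2 := by
  intro n
  induction n using Nat.strong_induction_on with
  | _ n ih =>
    intro x y hn hyx h
    rcases eq_or_ne y 0 with rfl | hy
    · exact ⟨x, by linarith [h]⟩
    have hy1 : 1 ≤ y^2 := by
      have h0 : 0 < y^2 := by positivity
      linarith [Int.lt_iff_add_one_le.mp h0]
    have hx1 : 1 ≤ x^2 := le_trans hy1 hyx
    have hx : x ≠ 0 := by intro hx0; rw [hx0] at hx1; norm_num at hx1
    set x' : ℤ := -(z*y) - x with hx'def
    have h' : x'^2 + z*x'*y + y^2 = M := by rw [hx'def]; linear_combination h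
    rcases lt_or_ge (x'^2) (x^2) with hlt | hge
    · have hmeas : (x'^2 + y^2).toNat < n := by
        rw [← hn]
        have : x'^2 + y^2 < x^2 + y^2 := by linarith
        omega
      rcases le_or_gt (y^2) (x'^2) with hc | hc
      · exact ih _ hmeas x' y rfl hc h'
      · exact ih _ hmeas y x' (by rw [add_comm]) hc.le (by linear_combination h')
    · exfalso
      have hxx' : x * x' = y^2 - M := by rw [hx'def]; linear_combination -h
      have h4 : x^2 * x^2 ≤ (y^2 - M)^2 := by
        rw [← hxx']
        calc x^2 * x^2 ≤ x^2 * x'^2 := mul_le_mul_of_nonneg_left hge (by positivity)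
          _ = (x*x')^2 := by ring
      have hM2 : M = x^2 + y^2 + z*(x*y) := by linear_combination -h
      rcases le_or_gt M (y^2) with hMy | hMy
      · have h5 : x^2 ≤ y^2 - M := by nlinarith [h4, hx1]
        have h6 : 2*x^2 + z*(x*y) ≤ 0 := by linarith [hM2, h5]
        have hxyneg : x*y < 0 := by
          by_contra hc
          push_neg at hc
          have := mul_nonneg (by linarith : (0:ℤ) ≤ z) hc
          linarith
        set a := |x| with ha
        set b := |y| with hbdef
        have ha2 : a^2 = x^2 := sq_abs x
        have hb2 : b^2 = y^2 := sq_abs y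
        have hab : a*b = -(x*y) := by rw [ha, hbdef, ← abs_mul, abs_of_neg hxyneg]
        have ha0 : 0 ≤ a := abs_nonneg x
        have hb0 : 0 ≤ b := abs_nonneg y
        have hb1 : 1 ≤ b := by nlinarith [hb2, hy1]
        have hba : b ≤ a := by nlinarith [hyx, ha2, hb2, ha0, hb0]
        have key : 2*a*a ≤ (z*b)*a := by
          have e1 : 2*a*a = 2*x^2 := by rw [← ha2]; ring
          have e2 : (z*b)*a = z*(a*b) := by ring
          rw [e1, e2, hab]
          linarith [h6]
        have h2ab : 2*a ≤ z*b := le_of_mul_le_mul_right key (by linarith)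
        have hineq := ineq1 z a b hb1 hba h2ab
        have hMab : M = a^2 + b^2 - z*(a*b) := by
          rw [ha2, hb2, hab]; linarith [hM2]
        linarith [hineq, hMab, h1]
      · have h5 : x^2 ≤ M - y^2 := by nlinarith [h4, hx1]
        have h6 : 0 ≤ z*(x*y) := by linarith [hM2, h5]
        have hne := mul_ne_zero hx hy
        have hxy : 1 ≤ x*y := by
          rcases lt_trichotomy (x*y) 0 with hn' | hz0 | hp
          · exfalso
            have hle : x*y ≤ -1 := by linarith [Int.lt_iff_add_one_le.mp hn']
            nlinarith [mul_le_mul_of_nonneg_left hle (by linarith : (0:ℤ) ≤ z)]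
          · exact absurd hz0 hne
          · linarith [Int.lt_iff_add_one_le.mp hp]
        have h7 : z ≤ z*(x*y) := by
          calc z = z*1 := by ring
            _ ≤ z*(x*y) := mul_le_mul_of_nonneg_left hxy (by linarith)
        linarith [hM2, hx1, hy1, h7]

lemma rep_sq (z M : ℤ) (h1 : 2 - |z| < M) (h2 : M < 2 + |z|) (x y : ℤ)
    (h : x^2+z*x*y+y^2 = M) : ∃ k, M = k^2 := by
  have hz1 : 1 ≤ |z| := by
    rcases abs_nonneg z |>.eq_or_lt with he | hl
    · exfalso; rw [← he] at h1 h2; linarith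
    · linarith [Int.lt_iff_add_one_le.mp hl]
  have key : ∀ x y : ℤ, x ^ 2 + |z| * x * y + y ^ 2 = M → ∃ k, M = k^2 := by
    intro x y hxy
    rcases le_or_gt (y^2) (x^2) with hc | hc
    · exact core |z| M hz1 h1 h2 _ x y rfl hc hxy
    · exact core |z| M hz1 h1 h2 _ y x rfl hc.le (by linarith [hxy])
  rcases abs_choice z with hz | hz
  · exact key x y (by rw [hz]; exact h)
  · exact key x (-y) (by rw [hz]; linarith [h])

lemma nat_prime_not_sq {q m : ℕ} (hq : Nat.Prime q) : q ≠ m^2 := by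
  intro h
  have hm : m ∣ q := ⟨m, by rw [h]; ring⟩
  rcases (Nat.Prime.eq_one_or_self_of_dvd hq m hm) with rfl | rfl
  · exact hq.ne_one (by simpa using h)
  · nlinarith [hq.two_le]

lemma prime_not_sq {p : ℤ} (hp : Prime p) (k : ℤ) : p ≠ k^2 := by
  intro h
  have hq : Nat.Prime p.natAbs := Int.prime_iff_natAbs_prime.mp hp
  have : p.natAbs = k.natAbs ^ 2 := by rw [h]; exact Int.natAbs_pow k 2
  exact nat_prime_not_sq hq this

variable (z : ℤ)

noncomputable def fz : ℤ[X] := X ^ 2 - C z * X + 1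

lemma fz_monic : (fz z).Monic := by unfold fz; monicity!

lemma fz_degree : (fz z).degree = 2 := by unfold fz; compute_degree!

noncomputable def rt : Rz z := AdjoinRoot.root (X ^ 2 - C z * X + 1 : ℤ[X])

lemma mk_C_eq (a : ℤ) :
    AdjoinRoot.mk (X ^ 2 - C z * X + 1 : ℤ[X]) (C a) = (a : Rz z) := by
  rw [AdjoinRoot.mk_C]
  exact eq_intCast (AdjoinRoot.of _) a

lemma root_rel : (rt z)^2 = (z : Rz z) * rt z - 1 := by
  have h := AdjoinRoot.mk_self (f := (X ^ 2 - C z * X + 1 : ℤ[X]))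
  have he : (AdjoinRoot.mk (X ^ 2 - C z * X + 1 : ℤ[X])) (X ^ 2 - C z * X + 1) =
      (rt z)^2 - (z : Rz z) * rt z + 1 := by
    rw [map_add, map_sub, map_pow, map_mul, AdjoinRoot.mk_X, mk_C_eq, map_one]
    rfl
  rw [he] at h
  linear_combination h

lemma repr' (β : Rz z) : ∃ a b : ℤ, β = (a : Rz z) + (b : Rz z) * rt z := by
  obtain ⟨g, rfl⟩ := AdjoinRoot.mk_surjective β
  refine ⟨(g %ₘ fz z).coeff 0, (g %ₘ fz z).coeff 1, ?_⟩
  have hdeg : (g %ₘ fz z).degree ≤ 1 := by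
    have := Polynomial.degree_modByMonic_lt g (fz_monic z)
    rw [fz_degree z] at this
    exact Order.le_of_lt_succ (by exact_mod_cast this)
  have hg : g %ₘ fz z = C ((g %ₘ fz z).coeff 1) * X + C ((g %ₘ fz z).coeff 0) :=
    Polynomial.eq_X_add_C_of_degree_le_one hdeg
  have hsplit : g = g %ₘ fz z + fz z * (g /ₘ fz z) :=
    (Polynomial.modByMonic_add_div g (fz z)).symm
  conv_lhs => rw [hsplit]
  rw [map_add, map_mul]
  rw [show AdjoinRoot.mk (X ^ 2 - C z * X + 1 : ℤ[X]) (fz z) = 0 from AdjoinRoot.mk_self]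
  rw [zero_mul, add_zero]
  conv_lhs => rw [hg]
  rw [map_add, map_mul, AdjoinRoot.mk_X, mk_C_eq, mk_C_eq]
  unfold rt
  ring

lemma indep (A B : ℤ) (h : (A : Rz z) + (B : Rz z) * rt z = 0) : A = 0 ∧ B = 0 := by
  have hmk : AdjoinRoot.mk (X ^ 2 - C z * X + 1 : ℤ[X]) (C B * X + C A) = 0 := by
    rw [map_add, map_mul, AdjoinRoot.mk_X, mk_C_eq, mk_C_eq]
    rw [← h]; unfold rt; ring
  rw [AdjoinRoot.mk_eq_zero] at hmk
  by_cases hAB : (C B * X + C A : ℤ[X]) = 0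
  · have hA : A = 0 := by
      have := congrArg (Polynomial.eval 0) hAB
      simpa using this
    have hB : B = 0 := by
      have := congrArg (Polynomial.eval 1) hAB
      simp at this
      omega
    exact ⟨hA, hB⟩
  · exfalso
    have hd := Polynomial.degree_le_of_dvd hmk hAB
    have h2 : (X ^ 2 - C z * X + 1 : ℤ[X]).degree = 2 := fz_degree z
    have h1 : (C B * X + C A : ℤ[X]).degree ≤ 1 := by
      apply Polynomial.degree_add_le_of_degree_le
      · exact (Polynomial.degree_C_mul_X_le B)
      · exact (Polynomial.degree_C_le).trans (by norm_num)
    rw [h2] at hd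
    exact absurd (hd.trans h1) (by norm_num)

lemma mul_formula (a b c d : ℤ) :
    ((a : Rz z) + (b : Rz z) * rt z) * ((c : Rz z) + (d : Rz z) * rt z)
      = ((a*c - b*d : ℤ) : Rz z) + ((a*d + b*c + z*b*d : ℤ) : Rz z) * rt z := by
  push_cast
  linear_combination ((b : Rz z) * (d : Rz z)) * root_rel z

lemma isUnit_of_norm_pm_one (a b : ℤ) (h : a^2 + z*a*b + b^2 = 1 ∨ a^2 + z*a*b + b^2 = -1) :
    IsUnit ((a : Rz z) + (b : Rz z) * rt z) := by
  have hmul := mul_formula z a b (a + z*b) (-b)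
  have e1 : a*(a+z*b) - b*(-b) = a^2 + z*a*b + b^2 := by ring
  have e2 : a*(-b) + b*(a+z*b) + z*b*(-b) = 0 := by ring
  rw [e1, e2] at hmul
  rcases h with h | h
  · rw [h] at hmul
    have hmul1 : ((a : Rz z) + (b : Rz z) * rt z) * (((a + z*b : ℤ) : Rz z) + ((-b : ℤ) : Rz z) * rt z) = 1 := by
      rw [hmul]; push_cast; ring
    exact IsUnit.of_mul_eq_one _ hmul1
  · rw [h] at hmul
    have hmul1 : ((a : Rz z) + (b : Rz z) * rt z) * (-(((a + z*b : ℤ) : Rz z) + ((-b : ℤ) : Rz z) * rt z)) = 1 := by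
      rw [mul_neg, hmul]; push_cast; ring
    exact IsUnit.of_mul_eq_one _ hmul1

lemma nat_dvd_prime_sq {q d : ℕ} (hq : Nat.Prime q) (h : d ∣ q^2) :
    d = 1 ∨ d = q ∨ d = q^2 := by
  rcases (Nat.dvd_prime_pow hq).mp h with ⟨i, hi, rfl⟩
  interval_cases i
  · left; rfl
  · right; left; exact pow_one q
  · right; right; rfl

theorem part3 (p : ℤ) (hp : Prime p) (hbound : |p| < |z| - 2) :
    Irreducible ((p : Rz z)) := by
  have hq : Nat.Prime p.natAbs := Int.prime_iff_natAbs_prime.mp hp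
  constructor
  · intro hu
    obtain ⟨u, hu'⟩ := hu
    have : ∃ v : Rz z, (p : Rz z) * v = 1 := ⟨(u⁻¹ : (Rz z)ˣ), by rw [← hu']; exact u.mul_inv⟩
    obtain ⟨v, hv⟩ := this
    obtain ⟨c, d, rfl⟩ := repr' z v
    have hmul := mul_formula z p 0 c d
    push_cast at hmul
    rw [show ((p:Rz z) + 0 * rt z) = (p : Rz z) by ring] at hmul
    rw [hv] at hmul
    have h0 : ((p*c - 0*d - 1 : ℤ) : Rz z) + ((p*d + 0*c + z*0*d : ℤ) : Rz z) * rt z = 0 := by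
      push_cast
      linear_combination -hmul
    obtain ⟨hA, hB⟩ := indep z _ _ h0
    have hpc : p * c = 1 := by linarith [hA]
    exact hp.not_isUnit (IsUnit.of_mul_eq_one (a := p) c hpc)
  · rintro β γ hfac
    obtain ⟨a, b, rfl⟩ := repr' z β
    obtain ⟨c, d, rfl⟩ := repr' z γ
    rw [mul_formula] at hfac
    have h0 : ((a*c - b*d - p : ℤ) : Rz z) + ((a*d + b*c + z*b*d : ℤ) : Rz z) * rt z = 0 := by
      push_cast
      push_cast at hfac
      linear_combination -hfac
    obtain ⟨hA, hB⟩ := indep z _ _ h0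
    have e1 : a*c - b*d = p := by linarith [hA]
    have e2 : a*d + b*c + z*b*d = 0 := hB
    set n1 := a^2 + z*a*b + b^2 with hn1
    set n2 := c^2 + z*c*d + d^2 with hn2
    have hNN : n1 * n2 = p^2 := by
      rw [hn1, hn2]
      linear_combination (a*c - b*d + p) * e1 + (z*(a*c-b*d) + (a*d+b*c+z*b*d)) * e2
    have hNa : n1.natAbs * n2.natAbs = p.natAbs^2 := by
      rw [← Int.natAbs_mul, hNN, Int.natAbs_pow]
    have hd1 : n1.natAbs ∣ p.natAbs^2 := ⟨n2.natAbs, hNa.symm⟩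
    have hrep : ∀ m : ℤ, m.natAbs = p.natAbs → (∃ x y : ℤ, x^2 + z*x*y + y^2 = m) → False := by
      intro m hm ⟨x, y, hxy⟩
      have habs : |m| = |p| := by
        rw [Int.abs_eq_natAbs, Int.abs_eq_natAbs, hm]
      have hi1 : 2 - |z| < m := by
        have := abs_lt.mp (by rw [habs]; linarith [hbound] : |m| < |z| - 2)
        linarith [this.1]
      have hi2 : m < 2 + |z| := by
        have := abs_lt.mp (by rw [habs]; linarith [hbound] : |m| < |z| - 2)
        linarith [this.2]
      obtain ⟨k, hk⟩ := rep_sq z m hi1 hi2 x y hxy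
      have : p.natAbs = k.natAbs ^ 2 := by
        rw [← hm, hk, Int.natAbs_pow]
      exact nat_prime_not_sq hq this
    rcases nat_dvd_prime_sq hq hd1 with h1 | h1 | h1
    · left
      have : n1 = 1 ∨ n1 = -1 := Int.natAbs_eq_iff.mp h1 |>.imp (by simp) (by simp)
      exact isUnit_of_norm_pm_one z a b (by rw [← hn1]; exact this)
    · exfalso
      exact hrep n1 h1 ⟨a, b, rfl⟩
    · right
      have hn2abs : n2.natAbs = 1 := by
        have hqpos : 0 < p.natAbs := hq.pos
        have h2' := hNa
        rw [h1] at h2'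
        exact Nat.eq_of_mul_eq_mul_left (show 0 < p.natAbs^2 by positivity)
          (by rw [mul_one]; exact h2')
      have : n2 = 1 ∨ n2 = -1 := Int.natAbs_eq_iff.mp hn2abs |>.imp (by simp) (by simp)
      exact isUnit_of_norm_pm_one z c d (by rw [← hn2]; exact this)

end Stmt14Aux

theorem stmt14 (z : ℤ) :
    (∀ M : ℤ, 2 - |z| < M → M < 2 + |z| →
      ((∃ x y : ℤ, x ^ 2 + z * x * y + y ^ 2 = M) ↔ ∃ k : ℤ, M = k ^ 2)) ∧
    (∀ p : ℤ, Prime p → 2 - |z| < p → p < 2 + |z| →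
      ¬ ∃ x y : ℤ, x ^ 2 + z * x * y + y ^ 2 = p) ∧
    (∀ p : ℤ, Prime p → |p| < |z| - 2 → Irreducible ((p : Rz z))) := by
  refine ⟨?_, ?_, ?_⟩
  · intro M hM1 hM2
    constructor
    · rintro ⟨x, y, h⟩
      exact Stmt14Aux.rep_sq z M hM1 hM2 x y h
    · rintro ⟨k, rfl⟩
      exact ⟨k, 0, by ring⟩
  · rintro p hp h1 h2 ⟨x, y, h⟩
    obtain ⟨k, hk⟩ := Stmt14Aux.rep_sq z p h1 h2 x y h
    exact Stmt14Aux.prime_not_sq hp k hk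
  · intro p hp hb
    exact Stmt14Aux.part3 z p hp hb
end

section
/- For every prime p : ℕ, there exist x y : ℤ with x^2 + 3*x*y + y^2 = p if and only if p = 5 or p % 5 = 1 or p % 5 = 4. (Equivalently: a positive prime p is of the form 5n ± 1 exactly when p is irregular and non-special in ℤ[i₃], while p = 5 is the positive special prime.) -/
/-!
Modulo 5, `x² + 3xy + y² ≡ (x - y)²`, so a represented prime is `5` or a square mod 5.

Conversely, let `p ≡ ±1 (mod 5)`. By quadratic reciprocity `5` is a square mod `p`, so
`t² + t - 1` has a root `t` mod `p`. Thue's lemma gives `(u, v) ≠ 0` with `u² ≤ p`, `v² ≤ p` and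
`u ≡ t v (mod p)`; then `p` divides `u² + uv - v²`, which lies in `[-5p/4, 5p/4]` and is nonzero
because `5` is not a square, hence equals `±p`. Finally `a² + ab - b²` is the norm form of
`ℤ[(1 + √5)/2]`, equivalent to `x² + 3xy + y²` via `(x, y) = (a - b, b)`, and multiplying by the
golden ratio (a unit of norm `-1`) turns a representation of `-p` into one of `p`.
-/

theorem sq_add_three_mul_mul_add_sq_emod_five (x y : ℤ) :
    (x ^ 2 + 3 * x * y + y ^ 2) % 5 = 0 ∨ (x ^ 2 + 3 * x * y + y ^ 2) % 5 = 1 ∨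
      (x ^ 2 + 3 * x * y + y ^ 2) % 5 = 4 := by
  have key : ∀ a b : ZMod 5, a ^ 2 + 3 * a * b + b ^ 2 = 0 ∨
      a ^ 2 + 3 * a * b + b ^ 2 = 1 ∨ a ^ 2 + 3 * a * b + b ^ 2 = 4 := by decide
  have hcast (r : ℤ) (h : ((x ^ 2 + 3 * x * y + y ^ 2 : ℤ) : ZMod 5) = r) :
      (x ^ 2 + 3 * x * y + y ^ 2) % 5 = r % 5 :=
    (ZMod.intCast_eq_intCast_iff' _ _ 5).mp h
  rcases key x y with h | h | h
  · exact .inl (hcast 0 (by push_cast; exact h))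
  · exact .inr (.inl (hcast 1 (by push_cast; exact h)))
  · exact .inr (.inr (hcast 4 (by push_cast; exact h)))

theorem isSquare_five_of_mod_five {p : ℕ} [Fact p.Prime] (hp : p % 5 = 1 ∨ p % 5 = 4) :
    IsSquare (5 : ZMod p) := by
  have := Fact.mk (by norm_num : Nat.Prime 5)
  have hsq : IsSquare (p : ZMod 5) := by
    rw [← ZMod.natCast_mod]
    rcases hp with h | h <;> rw [h]
    · exact ⟨1, rfl⟩
    · exact ⟨2, rfl⟩
  exact_mod_cast (ZMod.exists_sq_eq_prime_iff_of_mod_four_eq_one (p := 5) (q := p) rfl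
    (by omega)).mp hsq

theorem exists_sq_add_sub_one_eq_zero {p : ℕ} [Fact p.Prime] (hp : p ≠ 2)
    (h5 : IsSquare (5 : ZMod p)) : ∃ t : ZMod p, t ^ 2 + t - 1 = 0 := by
  obtain ⟨s, hs⟩ := h5
  have h2 : (2 : ZMod p) ≠ 0 := Ring.two_ne_zero (by rwa [ZMod.ringChar_zmod_n])
  refine ⟨(s - 1) / 2, ?_⟩
  field_simp
  linear_combination -hs

theorem ZMod.thue_lemma (n : ℕ) [NeZero n] (t : ZMod n) :
    ∃ u v : ℤ, (u, v) ≠ (0, 0) ∧ u ^ 2 ≤ n ∧ v ^ 2 ≤ n ∧ (u : ZMod n) = t * v := by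
  set m := n.sqrt
  have hcard : Fintype.card (ZMod n) < Fintype.card (Fin (m + 1) × Fin (m + 1)) := by
    rw [ZMod.card, Fintype.card_prod, Fintype.card_fin, ← sq]
    exact Nat.lt_succ_sqrt' n
  obtain ⟨⟨i₁, j₁⟩, ⟨i₂, j₂⟩, hne, heq⟩ := Fintype.exists_ne_map_eq_of_card_lt
    (fun ij : Fin (m + 1) × Fin (m + 1) => (ij.1 : ZMod n) - t * (ij.2 : ℕ)) hcard
  have hsmall (i j : Fin (m + 1)) : ((i : ℤ) - j) ^ 2 ≤ n := by
    have := i.isLt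
    have := j.isLt
    have hij : |(i : ℤ) - j| ≤ m := abs_sub_le_iff.mpr ⟨by omega, by omega⟩
    calc ((i : ℤ) - j) ^ 2 = |(i : ℤ) - j| ^ 2 := (sq_abs _).symm
      _ ≤ (m : ℤ) ^ 2 := by gcongr
      _ ≤ n := by rw [sq]; exact_mod_cast Nat.sqrt_le n
  refine ⟨i₁ - i₂, j₁ - j₂, ?_, hsmall i₁ i₂, hsmall j₁ j₂, ?_⟩
  · contrapose! hne
    simp only [Prod.mk.injEq, sub_eq_zero, Nat.cast_inj, Fin.val_inj] at hne
    rw [hne.1, hne.2]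
  · push_cast
    linear_combination heq

instance : Zsqrtd.Nonsquare 5 :=
  ⟨fun n h => by
    have : n ≤ 2 := by nlinarith
    interval_cases n <;> omega⟩

theorem sq_add_mul_sub_sq_ne_zero {a b : ℤ} (h : (a, b) ≠ (0, 0)) :
    a ^ 2 + a * b - b ^ 2 ≠ 0 := by
  intro h0
  obtain ⟨h1, rfl⟩ := Zsqrtd.divides_sq_eq_zero_z (d := 5) (x := 2 * a + b) (y := b)
    (by push_cast; linear_combination 4 * h0)
  exact h (by simp only [Prod.mk.injEq, and_true]; omega)

theorem exists_sq_add_mul_sub_sq_eq (n : ℕ) [NeZero n] {t : ZMod n} (ht : t ^ 2 + t - 1 = 0) :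
    ∃ a b : ℤ, a ^ 2 + a * b - b ^ 2 = n := by
  obtain ⟨u, v, hne, hu, hv, huv⟩ := ZMod.thue_lemma n t
  obtain ⟨k, hk⟩ : (n : ℤ) ∣ u ^ 2 + u * v - v ^ 2 := by
    rw [← ZMod.intCast_zmod_eq_zero_iff_dvd]
    push_cast
    rw [huv]
    linear_combination (v : ZMod n) ^ 2 * ht
  have hn : (0 : ℤ) < n := by exact_mod_cast Nat.pos_of_neZero n
  have hk0 : k ≠ 0 := by
    rintro rfl
    exact sq_add_mul_sub_sq_ne_zero hne (by simpa using hk)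
  have hlo : -2 < k := by
    by_contra!
    nlinarith [sq_nonneg (2 * u + v)]
  have hhi : k < 2 := by
    by_contra!
    nlinarith [sq_nonneg (u - 2 * v)]
  obtain rfl | rfl : k = -1 ∨ k = 1 := by omega
  · exact ⟨v, u + v, by linear_combination -hk⟩
  · exact ⟨u, v, by linear_combination hk⟩

theorem stmt17 (p : ℕ) (hp : p.Prime) :
    (∃ x y : ℤ, x ^ 2 + 3 * x * y + y ^ 2 = (p : ℤ)) ↔
      (p = 5 ∨ p % 5 = 1 ∨ p % 5 = 4) := by
  have := Fact.mk hp
  constructor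
  · rintro ⟨x, y, hxy⟩
    have hmod := sq_add_three_mul_mul_add_sq_emod_five x y
    rw [hxy] at hmod
    rcases hmod with h | h | h
    · exact .inl ((Nat.prime_dvd_prime_iff_eq (by norm_num) hp).mp (by omega)).symm
    · omega
    · omega
  · rintro (rfl | h5)
    · exact ⟨1, 1, by norm_num⟩
    · obtain ⟨t, ht⟩ := exists_sq_add_sub_one_eq_zero (by omega) (isSquare_five_of_mod_five h5)
      obtain ⟨a, b, hab⟩ := exists_sq_add_mul_sub_sq_eq p ht
      exact ⟨a - b, b, by linear_combination hab⟩
end
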